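/- arXiv:math/0601226 — 8 statements merged into one kernel-verified Lean document; each statement's English description precedes it below -/
import Mathlib

section
/- For an unbounded metric space (X,d) and integer n ≥ 0, the following are equivalent: (a) asdim(X,d) ≤ n; (b) there exists a metric d₁ on X, coarsely equivalent to d, such that the Nagata-Assouad dimension of (X,d₁) is at most n. -/
/-- `d` is a metric on `X`. -/
structure IsMetricOn {X : Type*} (d : X → X → ℝ) : Prop where
  refl : ∀ x, d x x = 0
  eq_of_eq_zero : ∀ x y, d x y = 0 → x = y
  symm : ∀ x y, d x y = d y x
  triangle : ∀ x y z, d x z ≤ d x y + d y z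

/-- Nagata-Assouad dimension at most `n` for the distance function `d` on `X`. -/
def NagataDimWithLE {X : Type*} (d : X → X → ℝ) (n : ℕ) : Prop :=
  ∃ C : ℝ, 0 < C ∧ ∀ r : ℝ, 0 < r →
    ∃ U : Fin (n + 1) → Set (Set X),
      (∀ x : X, ∃ i, ∃ V ∈ U i, x ∈ V) ∧
      (∀ i, ∀ V ∈ U i, ∀ W ∈ U i, V ≠ W → ∀ x ∈ V, ∀ y ∈ W, r < d x y) ∧
      (∀ i, ∀ V ∈ U i, ∀ x ∈ V, ∀ y ∈ V, d x y ≤ C * r)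

/-- Asymptotic dimension at most `n` for the distance function `d` on `X`. -/
def AsdimWithLE {X : Type*} (d : X → X → ℝ) (n : ℕ) : Prop :=
  ∀ r : ℝ, 0 < r → ∃ D : ℝ, 0 < D ∧
    ∃ U : Fin (n + 1) → Set (Set X),
      (∀ x : X, ∃ i, ∃ V ∈ U i, x ∈ V) ∧
      (∀ i, ∀ V ∈ U i, ∀ W ∈ U i, V ≠ W → ∀ x ∈ V, ∀ y ∈ W, r < d x y) ∧
      (∀ i, ∀ V ∈ U i, ∀ x ∈ V, ∀ y ∈ V, d x y ≤ D)

/-- Two distance functions on `X` are coarsely equivalent. -/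
def CoarselyEquivalent {X : Type*} (d d' : X → X → ℝ) : Prop :=
  ∃ ρ₁ ρ₂ : ℝ → ℝ, Monotone ρ₁ ∧ Monotone ρ₂ ∧
    Filter.Tendsto ρ₁ Filter.atTop Filter.atTop ∧
    ∀ x y : X, ρ₁ (d x y) ≤ d' x y ∧ d' x y ≤ ρ₂ (d x y)

/-!
Given covers witnessing `asdim ≤ n` with diameter bound `D r` at scale `r`, choose scales
`s₀ = 1`, `sₖ₊₁ = max (2 sₖ) (D sₖ)` and let `d₁ x y = 1 + max {k | sₖ ≤ dist x y}`
for `x ≠ y`. Since the scales at least double, the index of `a + b` exceeds that of `max a b`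
by at most one, which makes `d₁` a metric; it is coarsely equivalent to `dist` because the
scales tend to infinity. The `sₖ`-cover is `k`-disjoint for `d₁` and its members have
`d₁`-diameter at most `k + 2`, so at scale `r ≥ 1` it is a Nagata cover with constant `4`;
below scale `1` the cover by singletons is one.
Conversely, Nagata dimension bounds asymptotic dimension, and the latter is a coarse invariant.
-/
open Filter

section Covers

variable {X : Type*}

def HasDimCover (d : X → X → ℝ) (n : ℕ) (r D : ℝ) : Prop :=
  ∃ U : Fin (n + 1) → Set (Set X),
    (∀ x : X, ∃ i, ∃ V ∈ U i, x ∈ V) ∧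
    (∀ i, ∀ V ∈ U i, ∀ W ∈ U i, V ≠ W → ∀ x ∈ V, ∀ y ∈ W, r < d x y) ∧
    (∀ i, ∀ V ∈ U i, ∀ x ∈ V, ∀ y ∈ V, d x y ≤ D)

theorem HasDimCover.of_le {d d' : X → X → ℝ} {n : ℕ} {r r' D D' : ℝ}
    (h : HasDimCover d' n r' D') (hr : ∀ x y, d x y ≤ r → d' x y ≤ r')
    (hD : ∀ x y, d' x y ≤ D' → d x y ≤ D) : HasDimCover d n r D := by
  obtain ⟨U, hcover, hdisj, hdiam⟩ := h
  refine ⟨U, hcover, fun i V hV W hW hVW x hx y hy => ?_,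
    fun i V hV x hx y hy => hD x y (hdiam i V hV x hx y hy)⟩
  by_contra! hxy
  exact (hdisj i V hV W hW hVW x hx y hy).not_ge (hr x y hxy)

theorem hasDimCover_singletons {d : X → X → ℝ} (n : ℕ) {r D : ℝ}
    (hr : ∀ x y, x ≠ y → r < d x y) (hD : ∀ x, d x x ≤ D) : HasDimCover d n r D := by
  refine ⟨fun _ => Set.range singleton, fun x => ⟨0, {x}, ⟨x, rfl⟩, rfl⟩, ?_, ?_⟩
  · rintro i _ ⟨x, rfl⟩ _ ⟨y, rfl⟩ hxy _ rfl _ rfl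
    exact hr _ _ fun h => hxy (congrArg _ h)
  · rintro i _ ⟨x, rfl⟩ _ rfl _ rfl
    exact hD _

theorem NagataDimWithLE.asdimWithLE {d : X → X → ℝ} {n : ℕ} (h : NagataDimWithLE d n) :
    AsdimWithLE d n := by
  obtain ⟨C, hC, hcover⟩ := h
  exact fun r hr => ⟨C * r, mul_pos hC hr, hcover r hr⟩

theorem AsdimWithLE.of_coarselyEquivalent {d d' : X → X → ℝ} {n : ℕ} (h : AsdimWithLE d' n)
    (hdd' : CoarselyEquivalent d d') : AsdimWithLE d n := by
  obtain ⟨ρ₁, ρ₂, -, hρ₂, hρ₁, hρ⟩ := hdd'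
  intro r hr
  obtain ⟨D', -, hcover⟩ := h (max (ρ₂ r) 1) (by positivity)
  obtain ⟨M, hM⟩ := eventually_atTop.mp (hρ₁.eventually_gt_atTop D')
  refine ⟨max M 1, by positivity,
    HasDimCover.of_le hcover (fun x y hxy => ?_) fun x y hxy => ?_⟩
  · exact ((hρ x y).2.trans (hρ₂ hxy)).trans (le_max_left _ _)
  · by_contra! hMxy
    exact (hM _ ((le_max_left _ _).trans hMxy.le)).not_ge ((hρ x y).1.trans hxy)

end Covers

noncomputable def scaleSeq (D : ℝ → ℝ) : ℕ → ℝ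
  | 0 => 1
  | k + 1 => max (2 * scaleSeq D k) (D (scaleSeq D k))

/-- Below scale `1` the set is empty and `sSup ∅ = 0`. -/
noncomputable def scaleIndex (D : ℝ → ℝ) (t : ℝ) : ℕ :=
  sSup {k | scaleSeq D k ≤ t}

section Scales

variable (D : ℝ → ℝ)

theorem two_mul_scaleSeq_le (k : ℕ) : 2 * scaleSeq D k ≤ scaleSeq D (k + 1) :=
  le_max_left _ _

theorem le_scaleSeq_succ (k : ℕ) : D (scaleSeq D k) ≤ scaleSeq D (k + 1) :=
  le_max_right _ _

theorem two_pow_le_scaleSeq (k : ℕ) : (2 : ℝ) ^ k ≤ scaleSeq D k := by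
  induction k with
  | zero => simp [scaleSeq]
  | succ k ih => linarith [pow_succ (2 : ℝ) k, two_mul_scaleSeq_le D k]

theorem scaleSeq_pos (k : ℕ) : 0 < scaleSeq D k :=
  (pow_pos two_pos k).trans_le (two_pow_le_scaleSeq D k)

theorem bddAbove_scaleSeq_le (t : ℝ) : BddAbove {k | scaleSeq D k ≤ t} := by
  refine ⟨⌊t⌋₊, fun k hk => Nat.le_floor ?_⟩
  calc (k : ℝ) ≤ 2 ^ k := by exact_mod_cast Nat.lt_two_pow_self.le
    _ ≤ scaleSeq D k := two_pow_le_scaleSeq D k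
    _ ≤ t := hk

theorem le_scaleIndex {t : ℝ} {k : ℕ} (h : scaleSeq D k ≤ t) : k ≤ scaleIndex D t :=
  le_csSup (bddAbove_scaleSeq_le D t) h

theorem scaleSeq_scaleIndex_le {t : ℝ} (h : 0 < scaleIndex D t) :
    scaleSeq D (scaleIndex D t) ≤ t := by
  refine Nat.sSup_mem (Set.nonempty_iff_ne_empty.2 fun he => ?_) (bddAbove_scaleSeq_le D t)
  simp [scaleIndex, he] at h

theorem scaleIndex_le {t : ℝ} {N : ℕ} (h : t ≤ scaleSeq D N) : scaleIndex D t ≤ N := by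
  rcases Nat.eq_zero_or_pos (scaleIndex D t) with h0 | hpos
  · omega
  · have hmono : StrictMono (scaleSeq D) := strictMono_nat_of_lt_succ fun k => by
      linarith [two_mul_scaleSeq_le D k, scaleSeq_pos D k]
    exact hmono.le_iff_le.mp ((scaleSeq_scaleIndex_le D hpos).trans h)

theorem scaleIndex_mono : Monotone (scaleIndex D) := by
  intro a b hab
  rcases Nat.eq_zero_or_pos (scaleIndex D a) with h0 | hpos
  · omega
  · exact le_scaleIndex D ((scaleSeq_scaleIndex_le D hpos).trans hab)

theorem scaleIndex_zero : scaleIndex D 0 = 0 :=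
  Nat.le_zero.mp (scaleIndex_le D (scaleSeq_pos D 0).le)

theorem scaleIndex_two_mul_le (t : ℝ) : scaleIndex D (2 * t) ≤ scaleIndex D t + 1 := by
  obtain h0 | ⟨j, hj⟩ : scaleIndex D (2 * t) = 0 ∨ ∃ j, scaleIndex D (2 * t) = j + 1 :=
    (Nat.eq_zero_or_eq_succ_pred _).imp id fun h => ⟨_, h⟩
  · omega
  · have hmem := scaleSeq_scaleIndex_le D (t := 2 * t) (by omega)
    rw [hj] at hmem ⊢
    have : j ≤ scaleIndex D t := le_scaleIndex D (by linarith [two_mul_scaleSeq_le D j])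
    omega

theorem scaleIndex_add_le (a b : ℝ) :
    scaleIndex D (a + b) ≤ scaleIndex D a + scaleIndex D b + 1 :=
  calc scaleIndex D (a + b) ≤ scaleIndex D (2 * max a b) :=
        scaleIndex_mono D (by linarith [le_max_left a b, le_max_right a b])
    _ ≤ scaleIndex D (max a b) + 1 := scaleIndex_two_mul_le D _
    _ ≤ scaleIndex D a + scaleIndex D b + 1 := by
        rcases max_choice a b with h | h <;> rw [h] <;> omega

theorem tendsto_scaleIndex : Tendsto (scaleIndex D) atTop atTop :=
  tendsto_atTop_atTop.2 fun k => ⟨scaleSeq D k, fun _ ht => le_scaleIndex D ht⟩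

end Scales

open Classical in
noncomputable def scaleMetric {X : Type*} [PseudoMetricSpace X] (D : ℝ → ℝ) (x y : X) : ℝ :=
  if x = y then 0 else scaleIndex D (dist x y) + 1

section ScaleMetric

variable {X : Type*} [PseudoMetricSpace X] (D : ℝ → ℝ)

@[simp]
theorem scaleMetric_self (x : X) : scaleMetric D x x = 0 := by
  simp [scaleMetric]

theorem scaleMetric_of_ne {x y : X} (h : x ≠ y) :
    scaleMetric D x y = scaleIndex D (dist x y) + 1 := by
  simp [scaleMetric, h]

theorem scaleMetric_le (x y : X) : scaleMetric D x y ≤ scaleIndex D (dist x y) + 1 := by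
  by_cases h : x = y
  · subst h; simp only [scaleMetric_self]; positivity
  · exact (scaleMetric_of_ne D h).le

theorem scaleIndex_le_scaleMetric (x y : X) :
    (scaleIndex D (dist x y) : ℝ) ≤ scaleMetric D x y := by
  by_cases h : x = y
  · subst h; simp [scaleIndex_zero]
  · rw [scaleMetric_of_ne D h]; linarith

theorem one_le_scaleMetric {x y : X} (h : x ≠ y) : 1 ≤ scaleMetric D x y := by
  rw [scaleMetric_of_ne D h]; linarith [(scaleIndex D (dist x y)).cast_nonneg (α := ℝ)]

theorem scaleMetric_nonneg (x y : X) : 0 ≤ scaleMetric D x y :=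
  (Nat.cast_nonneg _).trans (scaleIndex_le_scaleMetric D x y)

theorem scaleMetric_triangle (x y z : X) :
    scaleMetric D x z ≤ scaleMetric D x y + scaleMetric D y z := by
  by_cases hxz : x = z
  · subst hxz; simpa using add_nonneg (scaleMetric_nonneg D x y) (scaleMetric_nonneg D y x)
  by_cases hxy : x = y
  · subst hxy; simp
  by_cases hyz : y = z
  · subst hyz; simp
  have hidx : scaleIndex D (dist x z) ≤ scaleIndex D (dist x y) + scaleIndex D (dist y z) + 1 :=
    (scaleIndex_mono D (dist_triangle x y z)).trans (scaleIndex_add_le D _ _)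
  rw [scaleMetric_of_ne D hxz, scaleMetric_of_ne D hxy, scaleMetric_of_ne D hyz]
  have : (scaleIndex D (dist x z) : ℝ) ≤
      scaleIndex D (dist x y) + scaleIndex D (dist y z) + 1 := by
    exact_mod_cast hidx
  linarith

theorem isMetricOn_scaleMetric : IsMetricOn (scaleMetric (X := X) D) where
  refl x := scaleMetric_self D x
  eq_of_eq_zero x y h := by
    by_contra hxy
    linarith [one_le_scaleMetric D hxy]
  symm x y := by
    by_cases h : x = y
    · subst h; rfl
    · rw [scaleMetric_of_ne D h, scaleMetric_of_ne D (Ne.symm h), dist_comm]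
  triangle := scaleMetric_triangle D

theorem coarselyEquivalent_scaleMetric :
    CoarselyEquivalent (fun x y : X => dist x y) (scaleMetric D) := by
  have hmono : Monotone fun t => (scaleIndex D t : ℝ) := fun a b h =>
    Nat.cast_le.2 (scaleIndex_mono D h)
  exact ⟨_, fun t => (scaleIndex D t : ℝ) + 1, hmono, fun a b h => by simpa using hmono h,
    tendsto_natCast_atTop_atTop.comp (tendsto_scaleIndex D),
    fun x y => ⟨scaleIndex_le_scaleMetric D x y, scaleMetric_le D x y⟩⟩

theorem nagataDimWithLE_scaleMetric {n : ℕ}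
    (hD : ∀ r, 0 < r → HasDimCover (fun x y : X => dist x y) n r (D r)) :
    NagataDimWithLE (scaleMetric (X := X) D) n := by
  refine ⟨4, by norm_num, fun r hr => ?_⟩
  rcases lt_or_ge r 1 with hr1 | hr1
  · exact hasDimCover_singletons n (fun x y hxy => hr1.trans_le (one_le_scaleMetric D hxy))
      fun x => by simp only [scaleMetric_self]; positivity
  set k := ⌈r⌉₊
  have hrk : r ≤ k := Nat.le_ceil r
  have hkr : (k : ℝ) < r + 1 := Nat.ceil_lt_add_one (by linarith)
  refine (hD _ (scaleSeq_pos D k)).of_le (fun x y hxy => ?_) fun x y hxy => ?_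
  · by_contra! hk
    have hne : x ≠ y := by
      rintro rfl
      linarith [scaleSeq_pos D k, dist_self x]
    have : (k : ℝ) ≤ scaleIndex D (dist x y) := by exact_mod_cast le_scaleIndex D hk.le
    linarith [scaleMetric_of_ne D hne]
  · have : (scaleIndex D (dist x y) : ℝ) ≤ k + 1 := by
      exact_mod_cast scaleIndex_le D (hxy.trans (le_scaleSeq_succ D k))
    linarith [scaleMetric_le D x y]

end ScaleMetric

theorem asdim_iff_exists_coarse_metric_nagata_general
    {X : Type*} [MetricSpace X] (n : ℕ) :
    AsdimWithLE (fun x y : X => dist x y) n ↔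
      ∃ d₁ : X → X → ℝ, IsMetricOn d₁ ∧
        CoarselyEquivalent (fun x y : X => dist x y) d₁ ∧ NagataDimWithLE d₁ n := by
  constructor
  · intro h
    choose! D _ hD using h
    exact ⟨scaleMetric D, isMetricOn_scaleMetric D, coarselyEquivalent_scaleMetric D,
      nagataDimWithLE_scaleMetric D hD⟩
  · rintro ⟨d₁, -, hequiv, hnagata⟩
    exact hnagata.asdimWithLE.of_coarselyEquivalent hequiv

theorem asdim_iff_exists_coarse_metric_nagata
    {X : Type*} [MetricSpace X] (hX : ¬ Bornology.IsBounded (Set.univ : Set X)) (n : ℕ) :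
    AsdimWithLE (fun x y : X => dist x y) n ↔
      ∃ d₁ : X → X → ℝ, IsMetricOn d₁ ∧
        CoarselyEquivalent (fun x y : X => dist x y) d₁ ∧ NagataDimWithLE d₁ n :=
  asdim_iff_exists_coarse_metric_nagata_general n
end

section
/- Let X be a metric space and n ≥ 0 an integer. If S^n is a Lipschitz extensor of X, then S^{n+1} is also a Lipschitz extensor of X. -/
/-- A metric space `E` is a Lipschitz extensor of `X`. -/
def LipschitzExtensorOf (X E : Type*) [MetricSpace X] [MetricSpace E] : Prop :=
  ∃ C : ℝ, 0 < C ∧ ∀ A : Set X, A.Nonempty → ∀ lam : ℝ, 0 < lam →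
    ∀ f : A → E, (∀ a b : A, dist (f a) (f b) ≤ lam * dist (a : X) (b : X)) →
      ∃ g : X → E, (∀ a : A, g a = f a) ∧
        ∀ x y : X, dist (g x) (g y) ≤ C * lam * dist x y

/-!
Write a point of the unit sphere of `E ⊕₂ F` as `(w, t)`. Extend the coordinates of `f` to
Lipschitz maps `W : X → closedBall 0 1` and `T : X → F`. On `{‖W‖ ≥ 1/2}` the direction `W / ‖W‖`
is Lipschitz, so the extensor property of the unit sphere of `E` extends it to `ω : X → S(E)`, and
`V = max (1/2) ‖W‖ • ω` agrees with `W` there and never enters the ball of radius `1/2`.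
With a cutoff `θ` equal to `1` where `‖T‖ ≤ 1/4` and to `0` where `‖T‖ ≥ 3/4`, the map
`(W + θ • (V - W), T)` still extends `f`, because a point of the sphere with `‖w‖ < 1/2` has
`‖t‖ > 3/4`, and its norm is at least `1/4` everywhere. Its radial projection is the extension.
-/

open Metric Set NNReal

section Normed

variable {X E : Type*} [PseudoMetricSpace X] [NormedAddCommGroup E] [NormedSpace ℝ E]

/-- Equal to `x / ‖x‖` outside the open ball of radius `c`; for `c = 1`, the retraction onto the
closed unit ball. -/
noncomputable def radialProj (c : ℝ≥0) (x : E) : E := (max (c : ℝ) ‖x‖)⁻¹ • x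

theorem radialProj_of_le {c : ℝ≥0} {x : E} (h : (c : ℝ) ≤ ‖x‖) :
    radialProj c x = ‖x‖⁻¹ • x := by
  rw [radialProj, max_eq_right h]

theorem radialProj_one_of_norm_le {x : E} (h : ‖x‖ ≤ 1) : radialProj 1 x = x := by
  rw [radialProj, NNReal.coe_one, max_eq_left h, inv_one, one_smul]

theorem norm_radialProj_of_le {c : ℝ≥0} (hc : 0 < c) {x : E} (h : (c : ℝ) ≤ ‖x‖) :
    ‖radialProj c x‖ = 1 := by
  rw [radialProj_of_le h, norm_smul, norm_inv, norm_norm,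
    inv_mul_cancel₀ ((NNReal.coe_pos.2 hc).trans_le h).ne']

theorem norm_radialProj_le {c : ℝ≥0} (hc : 0 < c) (x : E) : ‖radialProj c x‖ ≤ 1 := by
  have hm : 0 < max (c : ℝ) ‖x‖ := lt_max_of_lt_left hc
  rw [radialProj, norm_smul, norm_inv, Real.norm_of_nonneg hm.le, inv_mul_le_iff₀ hm, mul_one]
  exact le_max_right _ _

theorem lipschitzWith_radialProj {c : ℝ≥0} (hc : 0 < c) :
    LipschitzWith (2 / c) (radialProj c : E → E) := by
  refine LipschitzWith.of_dist_le_mul fun x y => ?_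
  set mx := max (c : ℝ) ‖x‖
  set my := max (c : ℝ) ‖y‖
  have hcx : (c : ℝ) ≤ mx := le_max_left _ _
  have hmx : 0 < mx := lt_max_of_lt_left hc
  have hmy : 0 < my := lt_max_of_lt_left hc
  have hm : |my - mx| ≤ ‖x - y‖ := by
    simpa only [my, mx, max_comm (c : ℝ), norm_sub_rev y x] using
      (abs_max_sub_max_le_abs ‖y‖ ‖x‖ c).trans (abs_norm_sub_norm_le y x)
  have hscale : |mx⁻¹ - my⁻¹| * ‖y‖ ≤ mx⁻¹ * ‖x - y‖ := by
    calc |mx⁻¹ - my⁻¹| * ‖y‖ ≤ |mx⁻¹ - my⁻¹| * my := by gcongr; exact le_max_right _ _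
      _ = mx⁻¹ * |my - mx| := by
        rw [inv_sub_inv hmx.ne' hmy.ne', abs_div, abs_mul, abs_of_pos hmx, abs_of_pos hmy]
        field_simp
      _ ≤ mx⁻¹ * ‖x - y‖ := by gcongr
  calc dist (radialProj c x) (radialProj c y)
      = ‖mx⁻¹ • (x - y) + (mx⁻¹ - my⁻¹) • y‖ := by
        rw [dist_eq_norm, smul_sub, sub_smul]
        exact congrArg norm (by simp only [radialProj, mx, my]; abel)
    _ ≤ mx⁻¹ * ‖x - y‖ + |mx⁻¹ - my⁻¹| * ‖y‖ := by
        refine (norm_add_le _ _).trans ?_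
        rw [norm_smul, norm_smul, norm_inv, Real.norm_of_nonneg hmx.le, Real.norm_eq_abs]
    _ ≤ 2 * mx⁻¹ * ‖x - y‖ := by linarith
    _ ≤ ↑(2 / c) * dist x y := by
        rw [dist_eq_norm, NNReal.coe_div, NNReal.coe_ofNat, div_eq_mul_inv]
        gcongr

theorem LipschitzWith.smul_of_norm_le {θ : X → ℝ} {u : X → E} {Kθ Ku a b : ℝ≥0}
    (hθ : LipschitzWith Kθ θ) (hu : LipschitzWith Ku u) (hθa : ∀ x, ‖θ x‖ ≤ a)
    (hub : ∀ x, ‖u x‖ ≤ b) : LipschitzWith (a * Ku + Kθ * b) fun x => θ x • u x := by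
  refine LipschitzWith.of_dist_le_mul fun x y => ?_
  have hd : θ x • u x - θ y • u y = θ x • (u x - u y) + (θ x - θ y) • u y := by
    rw [smul_sub, sub_smul]; abel
  rw [dist_eq_norm, hd, NNReal.coe_add, NNReal.coe_mul, NNReal.coe_mul, add_mul]
  refine (norm_add_le _ _).trans (add_le_add ?_ ?_) <;> rw [norm_smul]
  · rw [← dist_eq_norm, mul_assoc]
    exact mul_le_mul (hθa x) (hu.dist_le_mul x y) dist_nonneg a.2
  · rw [← dist_eq_norm, mul_right_comm]
    exact mul_le_mul (hθ.dist_le_mul x y) (hub y) (norm_nonneg _) (by positivity)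

theorem LipschitzWith.toLp_prodMk {α β : Type*} [SeminormedAddCommGroup α]
    [SeminormedAddCommGroup β] (p : ENNReal) [Fact (1 ≤ p)] {f : X → α} {g : X → β}
    {Kf Kg : ℝ≥0} (hf : LipschitzWith Kf f) (hg : LipschitzWith Kg g) :
    LipschitzWith (Kf + Kg) fun x => WithLp.toLp p (f x, g x) := by
  have hsplit : (fun x => WithLp.toLp p (f x, g x)) =
      fun x => WithLp.toLp p (f x, 0) + WithLp.toLp p (0, g x) := by
    funext x; apply WithLp.ofLp_injective; simp
  rw [hsplit]
  refine LipschitzWith.add (.of_dist_le_mul fun x y => ?_) (.of_dist_le_mul fun x y => ?_)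
  · rw [WithLp.dist_toLp_fst]; exact hf.dist_le_mul x y
  · rw [WithLp.dist_toLp_snd]; exact hg.dist_le_mul x y

theorem exists_lipschitzWith_cutoff {F : Type*} [SeminormedAddCommGroup F] {K : ℝ≥0}
    {T : X → F} (hT : LipschitzWith K T) :
    ∃ θ : X → ℝ, LipschitzWith (2 * K) θ ∧ (∀ x, ‖θ x‖ ≤ 1) ∧
      (∀ x, ‖T x‖ ≤ 4⁻¹ → θ x = 1) ∧ ∀ x, 3 / 4 ≤ ‖T x‖ → θ x = 0 := by
  have hlin : LipschitzWith 2 fun t : ℝ => 3 / 2 - 2 * t := .of_dist_le_mul fun a b => by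
    rw [Real.dist_eq, Real.dist_eq, show 3 / 2 - 2 * a - (3 / 2 - 2 * b) = -(2 * (a - b)) by ring,
      abs_neg, abs_mul, abs_two, NNReal.coe_ofNat]
  refine ⟨fun x => max 0 (min 1 (3 / 2 - 2 * ‖T x‖)), ?_, fun x => ?_, fun x hx => ?_,
    fun x hx => ?_⟩
  · simpa using ((hlin.comp (lipschitzWith_one_norm.comp hT)).const_min 1).const_max 0
  · rw [Real.norm_of_nonneg (le_max_left _ _)]
    exact max_le zero_le_one (min_le_left _ _)
  · dsimp only
    rw [min_eq_left (by linarith), max_eq_right zero_le_one]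
  · dsimp only
    rw [max_eq_left (min_le_of_right_le (by linarith))]

theorem quarter_le_norm_toLp_add_smul_sub {F : Type*} [SeminormedAddCommGroup F] {w v : E}
    {t : F} {θ : ℝ} (hv : 2⁻¹ ≤ ‖v‖) (hθ : ‖t‖ ≤ 4⁻¹ → θ = 1) :
    4⁻¹ ≤ ‖WithLp.toLp 2 (w + θ • (v - w), t)‖ := by
  by_cases ht : 4⁻¹ ≤ ‖t‖
  · exact ht.trans (WithLp.norm_snd_le _ (WithLp.toLp 2 (w + θ • (v - w), t)))
  · refine le_trans ?_ (WithLp.norm_fst_le _ (WithLp.toLp 2 (w + θ • (v - w), t)))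
    rw [WithLp.toLp_fst, hθ (not_le.1 ht).le, one_smul, add_sub_cancel]
    linarith

end Normed

def LipschitzExtensorWith (X : Type*) [PseudoMetricSpace X] {M : Type*} [PseudoMetricSpace M]
    (Y : Set M) (C : ℝ≥0) : Prop :=
  ∀ (K : ℝ≥0) (s : Set X) (f : X → M), LipschitzOnWith K f s → MapsTo f s Y →
    ∃ g : X → M, LipschitzWith (C * K) g ∧ EqOn g f s ∧ ∀ x, g x ∈ Y

theorem lipschitzExtensorOf_iff_exists_lipschitzExtensorWith {X M : Type*} [MetricSpace X]
    [MetricSpace M] {Y : Set M} (hY : Y.Nonempty) :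
    LipschitzExtensorOf X Y ↔ ∃ C, LipschitzExtensorWith X Y C := by
  obtain ⟨y₀, hy₀⟩ := hY
  constructor
  · rintro ⟨C, hC, hext⟩
    refine ⟨C.toNNReal, fun K s f hf hfs => ?_⟩
    rcases s.eq_empty_or_nonempty with rfl | hs
    · exact ⟨fun _ => y₀, LipschitzWith.const' _, eqOn_empty _ _, fun _ => hy₀⟩
    rcases eq_zero_or_pos K with rfl | hK
    · obtain ⟨a, ha⟩ := hs
      refine ⟨fun _ => f a, LipschitzWith.const' _, fun x hx => ?_, fun _ => hfs ha⟩
      simpa [eq_comm] using hf.dist_le_mul x hx a ha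
    obtain ⟨g, hgf, hg⟩ := hext s hs K hK (fun a => ⟨f a, hfs a.2⟩)
      fun a b => hf.dist_le_mul a a.2 b b.2
    refine ⟨fun x => g x, LipschitzWith.of_dist_le_mul fun x y => ?_,
      fun x hx => congrArg Subtype.val (hgf ⟨x, hx⟩), fun x => (g x).2⟩
    simpa [Real.coe_toNNReal _ hC.le, mul_assoc, Subtype.dist_eq] using hg x y
  · rintro ⟨C, hext⟩
    refine ⟨C + 1, by positivity, fun A _ lam hlam f hf => ?_⟩
    classical
    let F : X → M := fun x => if hx : x ∈ A then f ⟨x, hx⟩ else y₀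
    have hFA : ∀ a : A, F a = f a := fun a => dif_pos a.2
    obtain ⟨g, hg, hgF, hgY⟩ := hext lam.toNNReal A F
      (LipschitzOnWith.of_dist_le_mul fun x hx y hy => by
        simpa [Real.coe_toNNReal _ hlam.le, F, hx, hy, Subtype.dist_eq] using hf ⟨x, hx⟩ ⟨y, hy⟩)
      fun x hx => by simp [F, hx]
    refine ⟨fun x => ⟨g x, hgY x⟩, fun a => Subtype.ext ((hgF a.2).trans (hFA a)),
      fun x y => ?_⟩
    calc dist (g x) (g y) ≤ C * lam * dist x y := by
          simpa [Real.coe_toNNReal _ hlam.le, mul_assoc] using hg.dist_le_mul x y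
      _ ≤ (C + 1) * lam * dist x y := by gcongr; linarith

theorem LipschitzExtensorWith.image_isometryEquiv {X M M' : Type*} [PseudoMetricSpace X]
    [PseudoMetricSpace M] [PseudoMetricSpace M'] {Y : Set M} {C : ℝ≥0}
    (h : LipschitzExtensorWith X Y C) (e : M ≃ᵢ M') : LipschitzExtensorWith X (e '' Y) C := by
  intro K s f hf hfs
  obtain ⟨g, hg, hgf, hgY⟩ := h K s (e.symm ∘ f)
    (by simpa using e.symm.isometry.lipschitz.comp_lipschitzOnWith hf)
    fun x hx => by simpa [← e.preimage_symm] using hfs hx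
  exact ⟨e ∘ g, by simpa using e.isometry.lipschitz.comp hg,
    fun x hx => by simp [hgf hx], fun x => mem_image_of_mem e (hgY x)⟩

section Extensor

variable {X E F : Type*} [PseudoMetricSpace X] [NormedAddCommGroup E] [NormedSpace ℝ E]
  [NormedAddCommGroup F] [NormedSpace ℝ F]

theorem lipschitzExtensorWith_closedBall [FiniteDimensional ℝ E] :
    LipschitzExtensorWith X (closedBall (0 : E) 1) (2 * lipschitzExtensionConstant E) := by
  intro K s f hf hfs
  obtain ⟨g, hg, hfg⟩ := hf.extend_finite_dimension
  refine ⟨radialProj 1 ∘ g, ?_, fun x hx => ?_, fun x => ?_⟩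
  · simpa [mul_assoc] using (lipschitzWith_radialProj one_pos).comp hg
  · rw [Function.comp_apply, ← hfg hx,
      radialProj_one_of_norm_le (mem_closedBall_zero_iff.1 (hfs hx))]
  · exact mem_closedBall_zero_iff.2 (norm_radialProj_le one_pos _)

theorem LipschitzExtensorWith.exists_eq_of_half_le_norm {C : ℝ≥0}
    (hE : LipschitzExtensorWith X (sphere (0 : E) 1) C) {L : ℝ≥0} {u : X → E}
    (hu : LipschitzWith L u) (hu1 : ∀ x, ‖u x‖ ≤ 1) :
    ∃ v : X → E, LipschitzWith ((4 * C + 1) * L) v ∧ (∀ x, 2⁻¹ ≤ ‖v x‖ ∧ ‖v x‖ ≤ 1) ∧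
      ∀ x, 2⁻¹ ≤ ‖u x‖ → v x = u x := by
  have hhalf : (0 : ℝ≥0) < 2⁻¹ := by norm_num
  obtain ⟨ω, hω, hωu, hω1⟩ := hE (4 * L) {x | 2⁻¹ ≤ ‖u x‖} (radialProj 2⁻¹ ∘ u)
    (((lipschitzWith_radialProj hhalf).comp hu).weaken (by norm_num)).lipschitzOnWith
    fun x hx => mem_sphere_zero_iff_norm.2 (norm_radialProj_of_le hhalf (by simpa using hx))
  have hω1 : ∀ x, ‖ω x‖ = 1 := fun x => mem_sphere_zero_iff_norm.1 (hω1 x)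
  let r : X → ℝ := fun x => max 2⁻¹ ‖u x‖
  have hr : ∀ x, ‖r x‖ = r x := fun x => Real.norm_of_nonneg (by positivity)
  refine ⟨fun x => r x • ω x, ?_, fun x => ?_, fun x hx => ?_⟩
  · have := ((lipschitzWith_one_norm.comp hu).const_max 2⁻¹).smul_of_norm_le hω (a := 1) (b := 1)
      (fun x => (hr x).trans_le (max_le (by norm_num) (hu1 x))) (fun x => (hω1 x).le)
    exact this.weaken (le_of_eq (by ring))
  · rw [norm_smul, hω1, mul_one, hr]
    exact ⟨le_max_left _ _, max_le (by norm_num) (hu1 x)⟩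
  · have hx' : ((2⁻¹ : ℝ≥0) : ℝ) ≤ ‖u x‖ := by simpa using hx
    have hpos : ‖u x‖ ≠ 0 := (lt_of_lt_of_le (by norm_num) hx).ne'
    simp only [r, max_eq_right hx, hωu hx, Function.comp_apply, radialProj_of_le hx', smul_smul,
      mul_inv_cancel₀ hpos, one_smul]

theorem lipschitzExtensorWith_sphere_of_norm_ge {c C : ℝ≥0} (hc : 0 < c)
    (h : ∀ (K : ℝ≥0) (s : Set X) (f : X → E), LipschitzOnWith K f s → MapsTo f s (sphere 0 1) →
      ∃ g : X → E, LipschitzWith (C * K) g ∧ EqOn g f s ∧ ∀ x, (c : ℝ) ≤ ‖g x‖) :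
    LipschitzExtensorWith X (sphere (0 : E) 1) (2 / c * C) := by
  intro K s f hf hfs
  obtain ⟨g, hg, hgf, hgc⟩ := h K s f hf hfs
  refine ⟨radialProj c ∘ g, by simpa [mul_assoc] using (lipschitzWith_radialProj hc).comp hg,
    fun x hx => ?_, fun x => mem_sphere_zero_iff_norm.2 (norm_radialProj_of_le hc (hgc x))⟩
  have hfx : ‖f x‖ = 1 := mem_sphere_zero_iff_norm.1 (hfs hx)
  rw [Function.comp_apply, radialProj_of_le (hgc x), hgf hx, hfx, inv_one, one_smul]

theorem LipschitzExtensorWith.sphere_withLp_prod [FiniteDimensional ℝ E] [FiniteDimensional ℝ F]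
    {C : ℝ≥0} (hE : LipschitzExtensorWith X (sphere (0 : E) 1) C) :
    ∃ C', LipschitzExtensorWith X (sphere (0 : WithLp 2 (E × F)) 1) C' := by
  refine ⟨2 / 4⁻¹ * ((4 * C + 3) * (2 * lipschitzExtensionConstant E) +
      5 * lipschitzExtensionConstant F),
    lipschitzExtensorWith_sphere_of_norm_ge (by norm_num) fun K s f hf hfs => ?_⟩
  have hf1 : ∀ x ∈ s, ‖(f x).fst‖ ^ 2 + ‖(f x).snd‖ ^ 2 = 1 := fun x hx => by
    rw [← WithLp.prod_norm_sq_eq_of_L2, mem_sphere_zero_iff_norm.1 (hfs hx), one_pow]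
  obtain ⟨W, hW, hWf, hW1⟩ := lipschitzExtensorWith_closedBall K s (fun x => (f x).fst)
    (.of_dist_le_mul fun x hx y hy => (WithLp.dist_fst_le _ _).trans (hf.dist_le_mul x hx y hy))
    fun x hx => mem_closedBall_zero_iff.2 <|
      (WithLp.norm_fst_le E _).trans (mem_sphere_zero_iff_norm.1 (hfs hx)).le
  obtain ⟨T, hT, hTf⟩ := LipschitzOnWith.extend_finite_dimension (f := fun x => (f x).snd)
    (.of_dist_le_mul fun x hx y hy => (WithLp.dist_snd_le _ _).trans (hf.dist_le_mul x hx y hy))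
  obtain ⟨V, hV, hV1, hVW⟩ :=
    hE.exists_eq_of_half_le_norm hW fun x => mem_closedBall_zero_iff.1 (hW1 x)
  obtain ⟨θ, hθ, hθ1, hθ_one, hθ_zero⟩ := exists_lipschitzWith_cutoff hT
  refine ⟨fun x => WithLp.toLp 2 (W x + θ x • (V x - W x), T x), ?_, fun x hx => ?_, fun x => ?_⟩
  · have hVW2 : ∀ x, ‖V x - W x‖ ≤ (2 : ℝ≥0) := fun x => by
      push_cast
      linarith [norm_sub_le (V x) (W x), (hV1 x).2, mem_closedBall_zero_iff.1 (hW1 x)]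
    refine ((hW.add (hθ.smul_of_norm_le (a := 1) (hV.sub hW) hθ1 hVW2)).toLp_prodMk 2 hT).weaken
      (le_of_eq ?_)
    ring
  · have hWx : W x = (f x).fst := hWf hx
    have hTx : T x = (f x).snd := (hTf hx).symm
    have hcut : W x + θ x • (V x - W x) = W x := by
      by_cases hWx' : 2⁻¹ ≤ ‖W x‖
      · rw [hVW x hWx', sub_self, smul_zero, add_zero]
      · have := hf1 x hx
        rw [← hWx, ← hTx] at this
        rw [hθ_zero x (by nlinarith [norm_nonneg (W x), norm_nonneg (T x)]), zero_smul, add_zero]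
    show WithLp.toLp 2 (W x + θ x • (V x - W x), T x) = f x
    rw [hcut, hWx, hTx]
    rfl
  · push_cast
    exact quarter_le_norm_toLp_add_smul_sub (hV1 x).1 (hθ_one x)

end Extensor

theorem sphere_succ_extensor_of_sphere_extensor
    {X : Type*} [MetricSpace X] (n : ℕ)
    (h : LipschitzExtensorOf X (Metric.sphere (0 : EuclideanSpace ℝ (Fin (n + 1))) 1)) :
    LipschitzExtensorOf X (Metric.sphere (0 : EuclideanSpace ℝ (Fin (n + 2))) 1) := by
  have hS : ∀ m, (sphere (0 : EuclideanSpace ℝ (Fin (m + 1))) 1).Nonempty := fun _ =>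
    NormedSpace.sphere_nonempty.2 zero_le_one
  obtain ⟨C, hC⟩ := (lipschitzExtensorOf_iff_exists_lipschitzExtensorWith (hS n)).1 h
  obtain ⟨C', hC'⟩ := hC.sphere_withLp_prod (F := EuclideanSpace ℝ (Fin 1))
  let e : EuclideanSpace ℝ (Fin (n + 2)) ≃ₗᵢ[ℝ]
      WithLp 2 (EuclideanSpace ℝ (Fin (n + 1)) × EuclideanSpace ℝ (Fin 1)) :=
    (LinearIsometryEquiv.piLpCongrLeft 2 ℝ ℝ (finSumFinEquiv (m := n + 1) (n := 1)).symm).trans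
      (PiLp.sumPiLpEquivProdLpPiLp (𝕜 := ℝ) 2 fun _ => ℝ)
  refine (lipschitzExtensorOf_iff_exists_lipschitzExtensorWith (hS (n + 1))).2 ⟨C', ?_⟩
  simpa [e.symm.image_sphere] using hC'.image_isometryEquiv e.symm.toIsometryEquiv
end

section
/- Let X be a metric space, m ≥ 0 an integer, C > 0, and λ₂ > λ₁ > 0. Suppose that every λ-Lipschitz map f : A → ∂Δ^{m+1}, where A is a nonempty subset of X and λ₁ < λ < λ₂, extends to a (C·λ)-Lipschitz map X → ∂Δ^{m+1}. Then t = 1/(4C(m+2)²(m+1)) has the following property: every cover U = {U_0,…,U_{m+1}} of X by m+2 subsets which is r-Lebesgue for some r with 4(m+2)²/λ₂ < r < 4(m+2)²/λ₁ admits a (t·r)-Lebesgue refinement V of multiplicity at most m+1. -/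
/-- The boundary of the standard `(m+1)`-simplex in `ℝ^{m+2}` with the `ℓ¹`-metric. -/
def boundarySimplexL1 (m : ℕ) : Set (PiLp 1 fun _ : Fin (m + 2) => ℝ) :=
  {x | ((∀ i, 0 ≤ x i) ∧ ∑ i, x i = 1) ∧ ∃ i, x i = 0}

/-- The multiplicity of a family `V` of subsets of `X` is at most `m`. -/
def MultiplicityLE {X : Type*} [MetricSpace X] (V : Set (Set X)) (m : ℕ) : Prop :=
  ∀ x : X, {W | W ∈ V ∧ x ∈ interior W}.Finite ∧ {W | W ∈ V ∧ x ∈ interior W}.ncard ≤ m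

/-!
Normalising the distances `x ↦ infDist x (U i)ᶜ` to sum `1` gives a `2(m+2)/r`-Lipschitz map
from `X` to the simplex, which sends the union of the complements `(U i)ᶜ` into `∂Δ^{m+1}`.
Extending that restriction by hypothesis yields a `Cλ`-Lipschitz `g : X → ∂Δ^{m+1}` whose
`i`-th coordinate vanishes off `U i`, and `V_i = {g_i > 0}` refines `U`. A zero coordinate of
`g x` keeps `x` out of some `V_i`, and a coordinate `≥ 1/(m+1)` of `g x` stays positive on the
ball of radius `t r` around `x` because `Cλ t r < 1/(m+1)`. When some `U i` is all of `X`
(where `infDist x ∅ = 0` spoils the lower bound `r` on the sum), the constant map to a vertex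
does the same job.
-/

open Metric

theorem norm_inv_norm_smul_sub_inv_norm_smul_le {E : Type*} [NormedAddCommGroup E]
    [NormedSpace ℝ E] {a : E} (ha : a ≠ 0) (b : E) :
    ‖‖a‖⁻¹ • a - ‖b‖⁻¹ • b‖ ≤ 2 * ‖a - b‖ / ‖a‖ := by
  have ha' : 0 < ‖a‖ := norm_pos_iff.2 ha
  rcases eq_or_ne b 0 with rfl | hb
  · simp [norm_smul, ha'.ne']
  have hb' : 0 < ‖b‖ := norm_pos_iff.2 hb
  have hsplit : ‖a‖⁻¹ • a - ‖b‖⁻¹ • b =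
      ‖a‖⁻¹ • (a - b) + (‖a‖⁻¹ * (‖b‖ - ‖a‖) * ‖b‖⁻¹) • b := by
    rw [smul_sub, ← sub_eq_zero]
    have : ‖a‖⁻¹ * (‖b‖ - ‖a‖) * ‖b‖⁻¹ = ‖a‖⁻¹ - ‖b‖⁻¹ := by field_simp
    rw [this, sub_smul]
    abel
  calc ‖‖a‖⁻¹ • a - ‖b‖⁻¹ • b‖
      ≤ ‖a‖⁻¹ * ‖a - b‖ + ‖a‖⁻¹ * |‖b‖ - ‖a‖| := by
        rw [hsplit]
        refine (norm_add_le _ _).trans_eq ?_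
        rw [norm_smul, norm_smul, Real.norm_of_nonneg (inv_nonneg.2 ha'.le), Real.norm_eq_abs,
          abs_mul, abs_mul, abs_of_pos (inv_pos.2 ha'), abs_of_pos (inv_pos.2 hb'),
          mul_assoc _ ‖b‖⁻¹, inv_mul_cancel₀ hb'.ne', mul_one]
    _ ≤ ‖a‖⁻¹ * ‖a - b‖ + ‖a‖⁻¹ * ‖a - b‖ := by
        gcongr
        rw [abs_sub_comm]
        exact abs_norm_sub_norm_le a b
    _ = 2 * ‖a - b‖ / ‖a‖ := by ring

section Simplex

variable {m : ℕ}

theorem exists_inv_le_apply_of_mem_boundarySimplexL1 {x : PiLp 1 fun _ : Fin (m + 2) => ℝ}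
    (hx : x ∈ boundarySimplexL1 m) : ∃ i, ((m : ℝ) + 1)⁻¹ ≤ x i := by
  obtain ⟨⟨-, hsum⟩, j, hj⟩ := hx
  have hcard : (Finset.univ.erase j).card = m + 1 := by simp
  have hrest : ∑ i ∈ Finset.univ.erase j, x i = 1 := by
    rw [← hsum, ← Finset.sum_erase_add _ _ (Finset.mem_univ j), hj, add_zero]
  have hsum' : ∑ _i ∈ Finset.univ.erase j, ((m : ℝ) + 1)⁻¹ ≤ ∑ i ∈ Finset.univ.erase j, x i := by
    rw [Finset.sum_const, hcard, nsmul_eq_mul, hrest]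
    push_cast
    rw [mul_inv_cancel₀ (by positivity)]
  obtain ⟨i, -, hi⟩ := Finset.exists_le_of_sum_le
    (Finset.card_pos.1 (by rw [hcard]; omega)) hsum'
  exact ⟨i, hi⟩

theorem toLp_single_mem_boundarySimplexL1 (i : Fin (m + 2)) :
    WithLp.toLp 1 (Pi.single i 1 : Fin (m + 2) → ℝ) ∈ boundarySimplexL1 m := by
  obtain ⟨j, hj⟩ := exists_ne i
  refine ⟨⟨fun k => ?_, by simp⟩, j, by simp [hj]⟩
  rw [PiLp.toLp_apply]
  exact (Pi.single_nonneg (α := fun _ : Fin (m + 2) => ℝ)).2 zero_le_one k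

theorem inv_norm_smul_mem_boundarySimplexL1 {v : PiLp 1 fun _ : Fin (m + 2) => ℝ}
    (hv : ∀ i, 0 ≤ v i) (hv₀ : v ≠ 0) (hz : ∃ i, v i = 0) :
    ‖v‖⁻¹ • v ∈ boundarySimplexL1 m := by
  have hnorm : ‖v‖ = ∑ i, v i := by
    rw [PiLp.norm_eq_of_L1]
    exact Finset.sum_congr rfl fun i _ => Real.norm_of_nonneg (hv i)
  obtain ⟨j, hj⟩ := hz
  refine ⟨⟨fun i => ?_, ?_⟩, j, by simp [hj]⟩
  · simpa using mul_nonneg (inv_nonneg.2 (norm_nonneg v)) (hv i)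
  · simp only [PiLp.smul_apply, smul_eq_mul, ← Finset.mul_sum, ← hnorm]
    exact inv_mul_cancel₀ (norm_ne_zero_iff.2 hv₀)

end Simplex

theorem multiplicityLE_range {X : Type*} [MetricSpace X] {n : ℕ} (V : Fin (n + 1) → Set X)
    (h : ∀ x, ∃ j, x ∉ V j) : MultiplicityLE (Set.range V) n := by
  intro x
  obtain ⟨j, hj⟩ := h x
  have hsub : {W | W ∈ Set.range V ∧ x ∈ interior W} ⊆ V '' {j}ᶜ := by
    rintro W ⟨⟨i, rfl⟩, hx⟩
    exact ⟨i, fun hij => hj (hij ▸ interior_subset hx), rfl⟩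
  have hfin : (V '' {j}ᶜ).Finite := Set.toFinite _
  refine ⟨hfin.subset hsub, (Set.ncard_le_ncard hsub hfin).trans ?_⟩
  refine (Set.ncard_image_le (Set.toFinite _)).trans ?_
  simp [Set.ncard_eq_toFinset_card', Finset.card_compl]

section Cover

variable {X : Type*} [MetricSpace X]

theorem le_infDist_compl_of_ball_subset {U : Set X} (hU : Uᶜ.Nonempty) {x : X} {r : ℝ}
    (h : ball x r ⊆ U) : r ≤ infDist x Uᶜ :=
  (le_infDist hU).2 fun _ hy => not_lt.1 fun hlt => hy (h (mem_ball'.2 hlt))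

noncomputable def infDistComplVector {ι : Type*} (U : ι → Set X) (x : X) :
    PiLp 1 fun _ : ι => ℝ :=
  WithLp.toLp 1 fun i => infDist x (U i)ᶜ

variable {ι : Type*} [Fintype ι] (U : ι → Set X)

theorem dist_infDistComplVector_le (x y : X) :
    dist (infDistComplVector U x) (infDistComplVector U y) ≤ Fintype.card ι * dist x y := by
  rw [PiLp.dist_eq_of_L1]
  calc ∑ i, dist (infDist x (U i)ᶜ) (infDist y (U i)ᶜ)
      ≤ ∑ _i : ι, dist x y := Finset.sum_le_sum fun i _ => by
        simpa using (lipschitz_infDist_pt (U i)ᶜ).dist_le_mul x y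
    _ = Fintype.card ι * dist x y := by simp

theorem le_norm_infDistComplVector (hU : ∀ i, (U i)ᶜ.Nonempty) {x : X} {r : ℝ} {i : ι}
    (h : ball x r ⊆ U i) : r ≤ ‖infDistComplVector U x‖ :=
  calc r ≤ infDist x (U i)ᶜ := le_infDist_compl_of_ball_subset (hU i) h
    _ = ‖infDistComplVector U x i‖ := (Real.norm_of_nonneg infDist_nonneg).symm
    _ ≤ ‖infDistComplVector U x‖ := PiLp.norm_apply_le _ i

end Cover

section Refinement

variable {X : Type*} [MetricSpace X] {m : ℕ}

theorem exists_refinement_of_boundary_map (U : Fin (m + 2) → Set X) {ρ : ℝ}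
    (g : X → boundarySimplexL1 m) (hgU : ∀ i, ∀ y ∉ U i, (g y).1 i = 0)
    (hg : ∀ x y, dist x y < ρ → dist (g x) (g y) < ((m : ℝ) + 1)⁻¹) :
    ∃ V : Set (Set X), (∀ W ∈ V, ∃ i, W ⊆ U i) ∧ MultiplicityLE V (m + 1) ∧
      ∀ x, ∃ W ∈ V, ball x ρ ⊆ W := by
  refine ⟨Set.range fun i => {y | 0 < (g y).1 i}, ?_, ?_, ?_⟩
  · rintro _ ⟨i, rfl⟩
    exact ⟨i, fun y hy => not_not.1 fun hyU => hy.ne' (hgU i y hyU)⟩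
  · refine multiplicityLE_range _ fun x => ?_
    obtain ⟨j, hj⟩ := (g x).2.2
    exact ⟨j, fun hx => (show 0 < (g x).1 j from hx).ne' hj⟩
  · intro x
    obtain ⟨i, hi⟩ := exists_inv_le_apply_of_mem_boundarySimplexL1 (g x).2
    refine ⟨_, ⟨i, rfl⟩, fun y hy => ?_⟩
    have hclose : |(g x).1 i - (g y).1 i| < ((m : ℝ) + 1)⁻¹ :=
      (PiLp.dist_apply_le (g x).1 (g y).1 i).trans_lt (hg x y (mem_ball'.1 hy))
    show 0 < (g y).1 i
    linarith [le_abs_self ((g x).1 i - (g y).1 i)]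

end Refinement

section BoundaryMap

variable {X : Type*} [MetricSpace X] {m : ℕ}

variable (X m) in
def BoundarySimplexExtension (lam K : ℝ) : Prop :=
  ∀ A : Set X, A.Nonempty → ∀ f : A → boundarySimplexL1 m,
    (∀ a b : A, dist (f a) (f b) ≤ lam * dist (a : X) (b : X)) →
    ∃ g : X → boundarySimplexL1 m, (∀ a : A, g a = f a) ∧
      ∀ x y : X, dist (g x) (g y) ≤ K * dist x y

variable {U : Fin (m + 2) → Set X} {r lam K : ℝ}

theorem exists_boundary_map_of_compl_nonempty (hUc : ∀ i, (U i)ᶜ.Nonempty) (hr : 0 < r)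
    (hU : ∀ x, ∃ i, ball x r ⊆ U i) (hlam : 2 * ((m : ℝ) + 2) / r ≤ lam)
    (hext : BoundarySimplexExtension X m lam K) :
    ∃ g : X → boundarySimplexL1 m, (∀ i, ∀ y ∉ U i, (g y).1 i = 0) ∧
      ∀ x y : X, dist (g x) (g y) ≤ K * dist x y := by
  set Φ := infDistComplVector U
  have hΦr : ∀ x, r ≤ ‖Φ x‖ := fun x => (hU x).elim fun _ hi => le_norm_infDistComplVector U hUc hi
  have hΦ₀ : ∀ x, Φ x ≠ 0 := fun x => norm_pos_iff.1 (hr.trans_le (hΦr x))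
  have hlip : ∀ x y, dist (‖Φ x‖⁻¹ • Φ x) (‖Φ y‖⁻¹ • Φ y) ≤ lam * dist x y := fun x y =>
    calc dist (‖Φ x‖⁻¹ • Φ x) (‖Φ y‖⁻¹ • Φ y) ≤ 2 * dist (Φ x) (Φ y) / ‖Φ x‖ := by
          rw [dist_eq_norm, dist_eq_norm]
          exact norm_inv_norm_smul_sub_inv_norm_smul_le (hΦ₀ x) _
      _ ≤ 2 * ((m + 2) * dist x y) / r := by
          refine div_le_div₀ (by positivity) ?_ hr (hΦr x)
          simpa using mul_le_mul_of_nonneg_left (dist_infDistComplVector_le U x y) zero_le_two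
      _ = 2 * ((m : ℝ) + 2) / r * dist x y := by ring
      _ ≤ lam * dist x y := by gcongr
  set A := ⋃ i, (U i)ᶜ
  have hA : ∀ a ∈ A, ‖Φ a‖⁻¹ • Φ a ∈ boundarySimplexL1 m := fun a ha =>
    (Set.mem_iUnion.1 ha).elim fun i hi => inv_norm_smul_mem_boundarySimplexL1
      (fun _ => infDist_nonneg) (hΦ₀ a) ⟨i, infDist_zero_of_mem hi⟩
  obtain ⟨g, hgA, hg⟩ := hext A ((hUc 0).mono (Set.subset_iUnion _ 0))
    (fun a => ⟨_, hA a a.2⟩) fun a b => hlip a b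
  refine ⟨g, fun i y hy => ?_, hg⟩
  rw [congrArg Subtype.val (hgA ⟨y, Set.mem_iUnion.2 ⟨i, hy⟩⟩)]
  change ‖Φ y‖⁻¹ * infDist y (U i)ᶜ = 0
  rw [infDist_zero_of_mem hy, mul_zero]

theorem exists_boundary_map (hK : 0 ≤ K) (hr : 0 < r)
    (hU : ∀ x, ∃ i, ball x r ⊆ U i) (hlam : 2 * ((m : ℝ) + 2) / r ≤ lam)
    (hext : BoundarySimplexExtension X m lam K) :
    ∃ g : X → boundarySimplexL1 m, (∀ i, ∀ y ∉ U i, (g y).1 i = 0) ∧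
      ∀ x y : X, dist (g x) (g y) ≤ K * dist x y := by
  by_cases hfull : ∃ i, U i = Set.univ
  · obtain ⟨i, hi⟩ := hfull
    refine ⟨fun _ => ⟨_, toLp_single_mem_boundarySimplexL1 i⟩, fun j y hy => ?_, fun x y => ?_⟩
    · have hji : j ≠ i := by rintro rfl; exact hy (hi ▸ Set.mem_univ y)
      simp [hji]
    · rw [dist_self]
      positivity
  · push Not at hfull
    exact exists_boundary_map_of_compl_nonempty (fun i => Set.nonempty_compl.2 (hfull i)) hr hU
      hlam hext

end BoundaryMap

theorem lebesgue_refinement_of_boundary_extension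
    {X : Type*} [MetricSpace X] (m : ℕ) (C lam₁ lam₂ : ℝ)
    (hC : 0 < C) (h1 : 0 < lam₁) (h12 : lam₁ < lam₂)
    (hext : ∀ A : Set X, A.Nonempty → ∀ lam : ℝ, lam₁ < lam → lam < lam₂ →
      ∀ f : A → boundarySimplexL1 m,
        (∀ a b : A, dist (f a) (f b) ≤ lam * dist (a : X) (b : X)) →
        ∃ g : X → boundarySimplexL1 m, (∀ a : A, g a = f a) ∧
          ∀ x y : X, dist (g x) (g y) ≤ C * lam * dist x y) :
    ∀ r : ℝ, 4 * ((m : ℝ) + 2) ^ 2 / lam₂ < r → r < 4 * ((m : ℝ) + 2) ^ 2 / lam₁ →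
      ∀ U : Fin (m + 2) → Set X, (∀ x : X, ∃ i, Metric.ball x r ⊆ U i) →
        ∃ V : Set (Set X),
          (∀ W ∈ V, ∃ i, W ⊆ U i) ∧
          MultiplicityLE V (m + 1) ∧
          (∀ x : X, ∃ W ∈ V,
            Metric.ball x ((1 / (4 * C * ((m : ℝ) + 2) ^ 2 * ((m : ℝ) + 1))) * r) ⊆ W) := by
  intro r hr₂ hr₁ U hU
  set κ : ℝ := 4 * ((m : ℝ) + 2) ^ 2
  have hr : 0 < r := (div_pos (by positivity) (h1.trans h12)).trans hr₂
  have hκ₂ : κ / r < lam₂ := (div_lt_comm₀ (h1.trans h12) hr).1 hr₂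
  have hκ₁ : lam₁ < κ / r := (lt_div_comm₀ hr h1).1 hr₁
  have h2κ : 2 * ((m : ℝ) + 2) / r < κ / r := by gcongr; nlinarith
  obtain ⟨lam, hlam_lo, hlam_hi⟩ := exists_between (max_lt hκ₁ h2κ)
  have hlam₁ : lam₁ < lam := (le_max_left _ _).trans_lt hlam_lo
  have hClam : 0 < C * lam := mul_pos hC (h1.trans hlam₁)
  obtain ⟨g, hgU, hg⟩ := exists_boundary_map hClam.le hr hU ((le_max_right _ _).trans hlam_lo.le)
    fun A hA => hext A hA lam hlam₁ (hlam_hi.trans hκ₂)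
  refine exists_refinement_of_boundary_map U g hgU fun x y hxy => ?_
  calc dist (g x) (g y) ≤ C * lam * dist x y := hg x y
    _ < C * lam * (1 / (4 * C * ((m : ℝ) + 2) ^ 2 * ((m : ℝ) + 1)) * r) := by gcongr
    _ = lam / (κ / r) * ((m : ℝ) + 1)⁻¹ := by simp only [κ]; field_simp
    _ < 1 * ((m : ℝ) + 1)⁻¹ := by
        gcongr
        exact (div_lt_one (by positivity)).2 hlam_hi
    _ = ((m : ℝ) + 1)⁻¹ := one_mul _
end

section
/- Let X be a metric space, m ≥ 0 an integer, t > 0, and r₂ > r₁ > 0. Let s > 0 be a constant such that for every λ > 0, every λ-Lipschitz map from a subset of X into Δ^{m+1} extends to an (s·λ)-Lipschitz map of X into Δ^{m+1}. Assume that every r-Lebesgue cover U = {U_0,…,U_{m+1}} of X by m+2 subsets with r₁ < r < r₂ admits a (t·r)-Lebesgue refinement of multiplicity at most m+1. Then every λ-Lipschitz map f : A → ∂Δ^{m+1}, A a nonempty subset of X, with 1/(12·s·r₂·(m+2)) < λ < 1/(12·s·r₁·(m+2)), extends to a (C·λ)-Lipschitz map X → ∂Δ^{m+1}, where C = 50(m+2)²·s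 + 150·s²·(m+2)⁵/t. -/
/-- The standard `(m+1)`-simplex in `ℝ^{m+2}` with the `ℓ¹`-metric. -/
def stdSimplexL1 (m : ℕ) : Set (PiLp 1 fun _ : Fin (m + 2) => ℝ) :=
  {x | (∀ i, 0 ≤ x i) ∧ ∑ i, x i = 1}

/-!
Extend `f` to an `sλ`-Lipschitz map `h : X → Δ^{m+1}` and let `μ x` be the smallest coordinate of
`h x`; put `q = 1 / (12 (m + 2))`. Where `μ` is small, radial projection from the barycenter
pushes `h` onto `∂Δ^{m+1}`, with Lipschitz constant `O((m + 2) sλ)`. Where `μ` is large we use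
instead a partition of unity subordinate to the cover `U_i = {μ + 4q ≤ h_i} ∪ {5q ≤ μ}`. This cover
is `r`-Lebesgue for `r = q / (sλ)`, so it has a `tr`-Lebesgue refinement of multiplicity at most
`m + 1`; colouring each member by an `i` with `W ⊆ U_i`, the partition of unity has at most
`m + 1` nonzero coordinates and is `4(m + 1)/(tr)`-Lipschitz. The two maps are interpolated on
`3q ≤ μ ≤ 4q`, where the partition of unity vanishes on the coordinate at which `h` attains `μ`,
so that coordinate stays zero.
-/

open Metric Set Finset

theorem PiLp.dist_eq_sum_abs_of_L1 {ι : Type*} [Fintype ι] (x y : PiLp 1 fun _ : ι => ℝ) :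
    dist x y = ∑ i, |x i - y i| := by
  simp [PiLp.dist_eq_of_L1, Real.dist_eq]

section Simplex

variable {ι : Type*} [Fintype ι]

theorem abs_sub_le_sum_abs_sub (u v : ι → ℝ) (i : ι) : |u i - v i| ≤ ∑ j, |u j - v j| :=
  single_le_sum (f := fun j => |u j - v j|) (fun _ _ => abs_nonneg _) (mem_univ i)

theorem sum_abs_sub_le_two {u v : ι → ℝ} (hu : u ∈ stdSimplex ℝ ι) (hv : v ∈ stdSimplex ℝ ι) :
    ∑ i, |u i - v i| ≤ 2 :=
  calc ∑ i, |u i - v i| ≤ ∑ i, (u i + v i) :=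
        sum_le_sum fun i _ => abs_sub_le_iff.2 ⟨by linarith [hv.1 i], by linarith [hu.1 i]⟩
    _ = 2 := by rw [sum_add_distrib, hu.2, hv.2]; norm_num

theorem exists_inv_card_le_of_mem_stdSimplex {u : ι → ℝ} (hu : u ∈ stdSimplex ℝ ι) :
    ∃ i, (Fintype.card ι : ℝ)⁻¹ ≤ u i := by
  have hne : (univ : Finset ι).Nonempty :=
    nonempty_of_sum_ne_zero (by rw [hu.2]; exact one_ne_zero)
  have hcard : (Fintype.card ι : ℝ) ≠ 0 := by exact_mod_cast (card_pos.2 hne).ne'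
  obtain ⟨i, -, hi⟩ := exists_le_of_sum_le hne (f := fun _ => (Fintype.card ι : ℝ)⁻¹) (g := u)
    (by rw [hu.2, sum_const, card_univ, nsmul_eq_mul, mul_inv_cancel₀ hcard])
  exact ⟨i, hi⟩

theorem sum_abs_combo_sub_combo_le {a b : ℝ} (ha : a ∈ Icc (0 : ℝ) 1) {g g' w w' : ι → ℝ}
    (hg' : g' ∈ stdSimplex ℝ ι) (hw' : w' ∈ stdSimplex ℝ ι) :
    ∑ i, |((1 - a) • g + a • w) i - ((1 - b) • g' + b • w') i|
      ≤ ∑ i, |g i - g' i| + ∑ i, |w i - w' i| + 2 * |a - b| := by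
  calc ∑ i, |((1 - a) • g + a • w) i - ((1 - b) • g' + b • w') i|
      ≤ ∑ i, ((1 - a) * |g i - g' i| + a * |w i - w' i| + |a - b| * |w' i - g' i|) :=
        sum_le_sum fun i _ => by
          simp only [Pi.add_apply, Pi.smul_apply, smul_eq_mul]
          rw [show (1 - a) * g i + a * w i - ((1 - b) * g' i + b * w' i)
              = (1 - a) * (g i - g' i) + a * (w i - w' i) + (a - b) * (w' i - g' i) by ring]
          refine (abs_add_le _ _).trans (add_le_add ((abs_add_le _ _).trans_eq ?_) ?_)
          · rw [abs_mul, abs_mul, abs_of_nonneg (sub_nonneg.2 ha.2), abs_of_nonneg ha.1]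
          · rw [abs_mul]
    _ = (1 - a) * ∑ i, |g i - g' i| + a * ∑ i, |w i - w' i|
          + |a - b| * ∑ i, |w' i - g' i| := by
        rw [sum_add_distrib, sum_add_distrib, ← mul_sum, ← mul_sum, ← mul_sum]
    _ ≤ ∑ i, |g i - g' i| + ∑ i, |w i - w' i| + 2 * |a - b| := by
        have hG : 0 ≤ ∑ i, |g i - g' i| := sum_nonneg fun _ _ => abs_nonneg _
        have hW : 0 ≤ ∑ i, |w i - w' i| := sum_nonneg fun _ _ => abs_nonneg _
        nlinarith [sum_abs_sub_le_two hw' hg', abs_nonneg (a - b), ha.1, ha.2]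

noncomputable def sumNormalize (a : ι → ℝ) : ι → ℝ := fun i => a i / ∑ j, a j

theorem sumNormalize_mem_stdSimplex {a : ι → ℝ} (ha : ∀ i, 0 ≤ a i) (hpos : 0 < ∑ i, a i) :
    sumNormalize a ∈ stdSimplex ℝ ι :=
  ⟨fun i => div_nonneg (ha i) hpos.le, by simp only [sumNormalize, ← sum_div, div_self hpos.ne']⟩

theorem sum_abs_sumNormalize_sub_le {a b : ι → ℝ} (hb : ∀ i, 0 ≤ b i) {ρ : ℝ} (hρ : 0 < ρ)
    (ha : ρ ≤ ∑ i, a i) (hb' : ρ ≤ ∑ i, b i) :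
    ∑ i, |sumNormalize a i - sumNormalize b i| ≤ 2 / ρ * ∑ i, |a i - b i| := by
  set A := ∑ i, a i
  set B := ∑ i, b i
  set S := ∑ i, |a i - b i|
  have hA : 0 < A := hρ.trans_le ha
  have hB : 0 < B := hρ.trans_le hb'
  have hBA : |B - A| ≤ S := by
    rw [abs_sub_comm, ← sum_sub_distrib]
    exact abs_sum_le_sum_abs _ _
  calc ∑ i, |a i / A - b i / B|
      ≤ ∑ i, (|a i - b i| / A + b i * |B - A| / (A * B)) := sum_le_sum fun i _ => by
        rw [show a i / A - b i / B = (a i - b i) / A + b i * (B - A) / (A * B) by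
          field_simp; ring]
        refine (abs_add_le _ _).trans_eq ?_
        rw [abs_div, abs_of_pos hA, abs_div, abs_mul, abs_of_nonneg (hb i),
          abs_of_pos (mul_pos hA hB)]
    _ = S / A + B * |B - A| / (A * B) := by
        rw [sum_add_distrib, ← sum_div, ← sum_div, ← sum_mul]
    _ = (S + |B - A|) / A := by field_simp
    _ ≤ 2 * S / ρ := div_le_div₀ (by positivity) (by linarith) hρ ha
    _ = 2 / ρ * S := by ring

variable [Nonempty ι]

noncomputable def minCoord (u : ι → ℝ) : ℝ := univ.inf' univ_nonempty u

theorem minCoord_le (u : ι → ℝ) (i : ι) : minCoord u ≤ u i := inf'_le _ (mem_univ i)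

theorem exists_apply_eq_minCoord (u : ι → ℝ) : ∃ i, u i = minCoord u :=
  let ⟨i, _, hi⟩ := exists_mem_eq_inf' univ_nonempty u
  ⟨i, hi.symm⟩

theorem minCoord_eq_zero {u : ι → ℝ} (hu : ∀ i, 0 ≤ u i) {i : ι} (hi : u i = 0) :
    minCoord u = 0 :=
  le_antisymm (hi ▸ minCoord_le u i) (le_inf' _ _ fun j _ => hu j)

theorem abs_minCoord_sub_le (u v : ι → ℝ) :
    |minCoord u - minCoord v| ≤ ∑ i, |u i - v i| := by
  obtain ⟨i, hi⟩ := exists_apply_eq_minCoord u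
  obtain ⟨j, hj⟩ := exists_apply_eq_minCoord v
  have hi' := abs_sub_le_iff.1 (abs_sub_le_sum_abs_sub u v i)
  have hj' := abs_sub_le_iff.1 (abs_sub_le_sum_abs_sub u v j)
  rw [abs_sub_le_iff]
  constructor <;> linarith [minCoord_le u j, minCoord_le v i]

/-- Equal to `b + (u - b) / (1 - N c)`, where `b` is the barycenter, `N = card ι` and
`c = min (minCoord u) (4q)`: the radial projection from `b`, which reaches the boundary exactly
when `minCoord u ≤ 4q`. -/
noncomputable def radialPush (q : ℝ) (u : ι → ℝ) : ι → ℝ :=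
  sumNormalize fun i => u i - min (minCoord u) (4 * q)

variable {q : ℝ} {u v : ι → ℝ}

theorem two_thirds_le_sum_sub_min (hq : 12 * q * Fintype.card ι ≤ 1)
    (hu : u ∈ stdSimplex ℝ ι) : 2 / 3 ≤ ∑ i, (u i - min (minCoord u) (4 * q)) := by
  rw [sum_sub_distrib, hu.2, sum_const, card_univ, nsmul_eq_mul]
  nlinarith [min_le_right (minCoord u) (4 * q), (Nat.cast_nonneg _ : (0 : ℝ) ≤ Fintype.card ι)]

theorem radialPush_mem_stdSimplex (hq : 12 * q * Fintype.card ι ≤ 1)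
    (hu : u ∈ stdSimplex ℝ ι) : radialPush q u ∈ stdSimplex ℝ ι :=
  sumNormalize_mem_stdSimplex (fun i => sub_nonneg.2 ((min_le_left _ _).trans (minCoord_le u i)))
    (by linarith [two_thirds_le_sum_sub_min hq hu])

theorem radialPush_apply_eq_zero (hu : minCoord u ≤ 4 * q) {i : ι} (hi : u i = minCoord u) :
    radialPush q u i = 0 := by
  simp [radialPush, sumNormalize, min_eq_left hu, hi]

theorem radialPush_eq_self (hq : 0 ≤ q) (hu : u ∈ stdSimplex ℝ ι) (hu₀ : minCoord u = 0) :
    radialPush q u = u := by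
  funext i
  simp [radialPush, sumNormalize, hu₀, min_eq_left (by positivity : (0 : ℝ) ≤ 4 * q), hu.2]

theorem sum_abs_radialPush_sub_le (hq : 12 * q * Fintype.card ι ≤ 1) (hu : u ∈ stdSimplex ℝ ι)
    (hv : v ∈ stdSimplex ℝ ι) :
    ∑ i, |radialPush q u i - radialPush q v i| ≤
      3 * (Fintype.card ι + 1) * ∑ i, |u i - v i| := by
  set cu := min (minCoord u) (4 * q)
  set cv := min (minCoord v) (4 * q)
  have hc : |cu - cv| ≤ ∑ i, |u i - v i| := (abs_min_sub_min_le_max _ _ _ _).trans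
    (max_le (abs_minCoord_sub_le u v) (by simp; positivity))
  calc ∑ i, |radialPush q u i - radialPush q v i|
      ≤ 2 / (2 / 3) * ∑ i, |(u i - cu) - (v i - cv)| :=
        sum_abs_sumNormalize_sub_le
          (fun i => sub_nonneg.2 ((min_le_left _ _).trans (minCoord_le v i)))
          (by norm_num) (two_thirds_le_sum_sub_min hq hu) (two_thirds_le_sum_sub_min hq hv)
    _ ≤ 3 * ∑ i, (|u i - v i| + |cu - cv|) := by
        norm_num
        gcongr with i
        rw [sub_sub_sub_comm]
        exact abs_sub _ _
    _ = 3 * (∑ i, |u i - v i| + Fintype.card ι * |cu - cv|) := by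
        rw [sum_add_distrib, sum_const, card_univ, nsmul_eq_mul]
    _ ≤ 3 * (Fintype.card ι + 1) * ∑ i, |u i - v i| := by
        nlinarith [(Nat.cast_nonneg _ : (0 : ℝ) ≤ Fintype.card ι)]

noncomputable def blendWeight (q : ℝ) (u : ι → ℝ) : ℝ := max 0 (min 1 (minCoord u / q - 3))

theorem blendWeight_mem_Icc : blendWeight q u ∈ Icc (0 : ℝ) 1 :=
  ⟨le_max_left _ _, max_le zero_le_one (min_le_left _ _)⟩

theorem blendWeight_eq_zero (hq : 0 < q) (hu : minCoord u ≤ 3 * q) : blendWeight q u = 0 := by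
  have : minCoord u / q - 3 ≤ 0 := by rw [sub_nonpos, div_le_iff₀ hq]; linarith
  exact max_eq_left ((min_le_right _ _).trans this)

theorem blendWeight_eq_one (hq : 0 < q) (hu : 4 * q ≤ minCoord u) : blendWeight q u = 1 := by
  have : 1 ≤ minCoord u / q - 3 := by rw [le_sub_iff_add_le, le_div_iff₀ hq]; linarith
  rw [blendWeight, min_eq_left this, max_eq_right zero_le_one]

theorem abs_blendWeight_sub_le (hq : 0 < q) :
    |blendWeight q u - blendWeight q v| ≤ (∑ i, |u i - v i|) / q :=
  calc |blendWeight q u - blendWeight q v|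
      ≤ |min 1 (minCoord u / q - 3) - min 1 (minCoord v / q - 3)| := by
        simpa only [blendWeight, max_comm (0 : ℝ)] using abs_max_sub_max_le_abs _ _ 0
    _ ≤ |(minCoord u / q - 3) - (minCoord v / q - 3)| :=
        (abs_min_sub_min_le_max _ _ _ _).trans (by simp)
    _ = |minCoord u - minCoord v| / q := by
        rw [sub_sub_sub_cancel_right, ← sub_div, abs_div, abs_of_pos hq]
    _ ≤ (∑ i, |u i - v i|) / q := by gcongr; exact abs_minCoord_sub_le u v

noncomputable def blend (q : ℝ) (u w : ι → ℝ) : ι → ℝ :=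
  (1 - blendWeight q u) • radialPush q u + blendWeight q u • w

theorem blend_mem_stdSimplex (hq : 12 * q * Fintype.card ι ≤ 1) (hu : u ∈ stdSimplex ℝ ι)
    {w : ι → ℝ} (hw : w ∈ stdSimplex ℝ ι) : blend q u w ∈ stdSimplex ℝ ι :=
  convex_stdSimplex ℝ ι (radialPush_mem_stdSimplex hq hu) hw
    (sub_nonneg.2 blendWeight_mem_Icc.2) blendWeight_mem_Icc.1 (by ring)

theorem blend_eq_self (hq : 0 < q) (hu : u ∈ stdSimplex ℝ ι) (hu₀ : minCoord u = 0)
    (w : ι → ℝ) : blend q u w = u := by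
  rw [blend, blendWeight_eq_zero hq (by rw [hu₀]; positivity), radialPush_eq_self hq.le hu hu₀]
  simp

theorem exists_blend_apply_eq_zero (hq : 0 < q) {w : ι → ℝ} (hw : ∀ i, 0 ≤ w i)
    (hw₀ : ∃ i, w i = 0)
    (hsupp : ∀ i, 0 < w i → minCoord u + 4 * q ≤ u i ∨ 5 * q ≤ minCoord u) :
    ∃ i, blend q u w i = 0 := by
  rcases le_or_gt (minCoord u) (4 * q) with hnear | hfar
  · obtain ⟨i, hi⟩ := exists_apply_eq_minCoord u
    have hpush := radialPush_apply_eq_zero hnear hi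
    refine ⟨i, ?_⟩
    rcases le_or_gt (minCoord u) (3 * q) with h3 | h3
    · simp [blend, blendWeight_eq_zero hq h3, hpush]
    · have hwi : w i = 0 := by
        by_contra hne
        rcases hsupp i ((hw i).lt_of_ne' hne) with h | h <;> linarith
      simp [blend, hpush, hwi]
  · obtain ⟨i, hi⟩ := hw₀
    exact ⟨i, by simp [blend, blendWeight_eq_one hq hfar.le, hi]⟩

theorem sum_abs_blend_sub_le (hq : 0 < q) (hq' : 12 * q * Fintype.card ι ≤ 1)
    (hu : u ∈ stdSimplex ℝ ι) (hv : v ∈ stdSimplex ℝ ι) {w w' : ι → ℝ}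
    (hw' : w' ∈ stdSimplex ℝ ι) :
    ∑ i, |blend q u w i - blend q v w' i| ≤
      (3 * (Fintype.card ι + 1) + 2 / q) * ∑ i, |u i - v i| + ∑ i, |w i - w' i| := by
  calc ∑ i, |blend q u w i - blend q v w' i|
      ≤ ∑ i, |radialPush q u i - radialPush q v i| + ∑ i, |w i - w' i|
          + 2 * |blendWeight q u - blendWeight q v| :=
        sum_abs_combo_sub_combo_le blendWeight_mem_Icc (radialPush_mem_stdSimplex hq' hv) hw'
    _ ≤ 3 * (Fintype.card ι + 1) * ∑ i, |u i - v i| + ∑ i, |w i - w' i|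
          + 2 * ((∑ i, |u i - v i|) / q) := by
        gcongr
        exacts [sum_abs_radialPush_sub_le hq' hu hv, abs_blendWeight_sub_le hq]
    _ = _ := by ring

end Simplex

section Cover

variable {X : Type*} [MetricSpace X] {ι : Type*} [Fintype ι]

def simplexCover [Nonempty ι] (q : ℝ) (h : X → ι → ℝ) (i : ι) : Set X :=
  {x | minCoord (h x) + 4 * q ≤ h x i ∨ 5 * q ≤ minCoord (h x)}

theorem exists_ball_subset_simplexCover [Nonempty ι] {q : ℝ}
    (hq : 12 * q * Fintype.card ι ≤ 1) {h : X → ι → ℝ} (hh : ∀ x, h x ∈ stdSimplex ℝ ι)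
    {L r : ℝ} (hL : 0 ≤ L) (hLr : L * r ≤ q)
    (hlip : ∀ x y, ∑ i, |h x i - h y i| ≤ L * dist x y) (x : X) :
    ∃ i, ball x r ⊆ simplexCover q h i := by
  have hclose : ∀ y ∈ ball x r, ∑ i, |h x i - h y i| ≤ q := fun y hy =>
    (hlip x y).trans ((mul_le_mul_of_nonneg_left (mem_ball'.1 hy).le hL).trans hLr)
  have hmin : ∀ y ∈ ball x r, |minCoord (h x) - minCoord (h y)| ≤ q := fun y hy =>
    (abs_minCoord_sub_le _ _).trans (hclose y hy)
  by_cases hx : minCoord (h x) ≤ 6 * q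
  · obtain ⟨i, hi⟩ := exists_inv_card_le_of_mem_stdSimplex (hh x)
    have hN : (0 : ℝ) < Fintype.card ι := by exact_mod_cast Fintype.card_pos
    have h12 : 12 * q ≤ (Fintype.card ι : ℝ)⁻¹ := by
      rw [← one_div, le_div_iff₀ hN]
      exact hq
    refine ⟨i, fun y hy => Or.inl ?_⟩
    have hiy := abs_sub_le_iff.1 ((abs_sub_le_sum_abs_sub _ _ i).trans (hclose y hy))
    linarith [abs_sub_le_iff.1 (hmin y hy)]
  · refine ⟨Classical.arbitrary ι, fun y hy => Or.inr ?_⟩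
    linarith [abs_sub_le_iff.1 (hmin y hy)]

end Cover

section PartitionOfUnity

variable {X : Type*} [MetricSpace X] {ι : Type*} [Fintype ι]

theorem exists_lipschitz_cutoff (W : Set X) {ρ : ℝ} (hρ : 0 ≤ ρ) :
    ∃ ψ : X → ℝ, (∀ x, 0 ≤ ψ x) ∧ LipschitzWith 1 ψ ∧ (∀ x, 0 < ψ x → x ∈ interior W) ∧
      ∀ x, ball x ρ ⊆ W → ρ ≤ ψ x := by
  rcases Wᶜ.eq_empty_or_nonempty with hW | hW
  · rw [compl_empty_iff] at hW
    subst hW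
    exact ⟨fun _ => ρ, fun _ => hρ, (LipschitzWith.const ρ).weaken zero_le_one,
      fun x _ => by simp, fun _ _ => le_rfl⟩
  · refine ⟨fun x => infDist x Wᶜ, fun _ => infDist_nonneg, lipschitz_infDist_pt _,
      fun x hx => interior_maximal ball_infDist_compl_subset isOpen_ball (mem_ball_self hx),
      fun x hx => (le_infDist hW).2 fun y hy => ?_⟩
    by_contra! hlt
    exact hy (hx (mem_ball'.2 hlt))

theorem exists_lipschitz_bumps {n : ℕ} {V : Set (Set X)} (hmult : MultiplicityLE V n) {ρ : ℝ}
    (hρ : 0 < ρ) (hleb : ∀ x, ∃ W ∈ V, ball x ρ ⊆ W) :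
    ∃ (S : X → Finset (Set X)) (ψ : Set X → X → ℝ), (∀ x, ∀ W ∈ S x, W ∈ V ∧ x ∈ W) ∧
      (∀ x, (S x).card ≤ n) ∧ (∀ W x, 0 ≤ ψ W x) ∧ (∀ W, LipschitzWith 1 (ψ W)) ∧
      (∀ x, ∀ W ∈ V, W ∉ S x → ψ W x = 0) ∧ ∀ x, ρ ≤ ∑ W ∈ S x, ψ W x := by
  choose ψ hψ₀ hψlip hψint hψball using fun W : Set X => exists_lipschitz_cutoff W hρ.le
  have hS : ∀ x W, W ∈ (hmult x).1.toFinset ↔ W ∈ V ∧ x ∈ interior W :=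
    fun x W => (hmult x).1.mem_toFinset
  refine ⟨fun x => (hmult x).1.toFinset, ψ,
    fun x W hW => ((hS x W).1 hW).imp_right fun h => interior_subset h,
    fun x => by rw [← ncard_eq_toFinset_card _ (hmult x).1]; exact (hmult x).2, hψ₀, hψlip,
    fun x W hWV hWS => (hψ₀ W x).eq_of_not_lt' fun hpos =>
      hWS ((hS x W).2 ⟨hWV, hψint W x hpos⟩),
    fun x => ?_⟩
  obtain ⟨W, hWV, hball⟩ := hleb x
  exact (hψball W x hball).trans (single_le_sum (fun W _ => hψ₀ W x)
    ((hS x W).2 ⟨hWV, interior_maximal hball isOpen_ball (mem_ball_self hρ)⟩))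

theorem sum_abs_sum_fiberwise_sub_le [DecidableEq ι] {κ : Type*} (F : Finset κ) (c : κ → ι)
    {ψ : κ → X → ℝ} (hψ : ∀ k, LipschitzWith 1 (ψ k)) (x y : X) :
    ∑ i, |∑ k ∈ F with c k = i, ψ k x - ∑ k ∈ F with c k = i, ψ k y| ≤ F.card * dist x y :=
  calc ∑ i, |∑ k ∈ F with c k = i, ψ k x - ∑ k ∈ F with c k = i, ψ k y|
      ≤ ∑ i, ∑ k ∈ F with c k = i, |ψ k x - ψ k y| := sum_le_sum fun i _ => by
        rw [← sum_sub_distrib]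
        exact abs_sum_le_sum_abs _ _
    _ = ∑ k ∈ F, |ψ k x - ψ k y| := sum_fiberwise F c _
    _ ≤ ∑ _k ∈ F, dist x y := sum_le_sum fun k _ => by
        simpa [Real.dist_eq] using (hψ k).dist_le_mul x y
    _ = F.card * dist x y := by rw [sum_const, nsmul_eq_mul]

theorem exists_lipschitz_weights_subordinate {n : ℕ} (hn : n < Fintype.card ι)
    (U : ι → Set X) {V : Set (Set X)} (hVU : ∀ W ∈ V, ∃ i, W ⊆ U i)
    (hmult : MultiplicityLE V n) {ρ : ℝ} (hρ : 0 < ρ) (hleb : ∀ x, ∃ W ∈ V, ball x ρ ⊆ W) :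
    ∃ a : X → ι → ℝ, (∀ x i, 0 ≤ a x i) ∧ (∀ x, ρ ≤ ∑ i, a x i) ∧ (∀ x, ∃ i, a x i = 0) ∧
      (∀ x i, 0 < a x i → x ∈ U i) ∧ ∀ x y, ∑ i, |a x i - a y i| ≤ 2 * n * dist x y := by
  classical
  have : Nonempty ι := Fintype.card_pos_iff.1 (by omega)
  choose! c hc using hVU
  obtain ⟨S, ψ, hS, hScard, hψ₀, hψlip, hψS, hψρ⟩ := exists_lipschitz_bumps hmult hρ hleb
  have hext : ∀ x (F : Finset (Set X)), S x ⊆ F → (∀ W ∈ F, W ∈ V) → ∀ i,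
      ∑ W ∈ F with c W = i, ψ W x = ∑ W ∈ S x with c W = i, ψ W x :=
    fun x F hSF hFV i => (sum_subset (filter_subset_filter _ hSF) fun W hWF hWS =>
      hψS x W (hFV W (mem_filter.1 hWF).1) fun h =>
        hWS (mem_filter.2 ⟨h, (mem_filter.1 hWF).2⟩)).symm
  refine ⟨fun x i => ∑ W ∈ S x with c W = i, ψ W x, fun x i => sum_nonneg fun W _ => hψ₀ W x,
    fun x => (hψρ x).trans_eq (sum_fiberwise _ _ _).symm, fun x => ?_, fun x i hpos => ?_,
    fun x y => ?_⟩
  · obtain ⟨i, -, hi⟩ := exists_mem_notMem_of_card_lt_card (s := (S x).image c) (t := univ)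
      (by rw [card_univ]; linarith [card_image_le (s := S x) (f := c), hScard x])
    refine ⟨i, sum_eq_zero fun W hW => ?_⟩
    rw [mem_filter] at hW
    exact absurd (hW.2 ▸ mem_image_of_mem c hW.1) hi
  · obtain ⟨W, hW⟩ := nonempty_of_sum_ne_zero hpos.ne'
    rw [mem_filter] at hW
    exact hW.2 ▸ hc W (hS x W hW.1).1 (hS x W hW.1).2
  · set F := S x ∪ S y
    have hFV : ∀ W ∈ F, W ∈ V := fun W hW => by
      rcases mem_union.1 hW with h | h
      exacts [(hS x W h).1, (hS y W h).1]
    calc ∑ i, |∑ W ∈ S x with c W = i, ψ W x - ∑ W ∈ S y with c W = i, ψ W y|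
        = ∑ i, |∑ W ∈ F with c W = i, ψ W x - ∑ W ∈ F with c W = i, ψ W y| := by
          simp only [hext x F subset_union_left hFV, hext y F subset_union_right hFV]
      _ ≤ F.card * dist x y := sum_abs_sum_fiberwise_sub_le F c hψlip x y
      _ ≤ 2 * n * dist x y := by
          gcongr
          have : F.card ≤ 2 * n :=
            (Finset.card_union_le _ _).trans (by linarith [hScard x, hScard y])
          exact_mod_cast this

theorem exists_lipschitz_partition_subordinate {n : ℕ} (hn : n < Fintype.card ι)
    (U : ι → Set X) {V : Set (Set X)} (hVU : ∀ W ∈ V, ∃ i, W ⊆ U i)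
    (hmult : MultiplicityLE V n) {ρ : ℝ} (hρ : 0 < ρ) (hleb : ∀ x, ∃ W ∈ V, ball x ρ ⊆ W) :
    ∃ ν : X → ι → ℝ, (∀ x, ν x ∈ stdSimplex ℝ ι) ∧ (∀ x, ∃ i, ν x i = 0) ∧
      (∀ x i, 0 < ν x i → x ∈ U i) ∧ ∀ x y, ∑ i, |ν x i - ν y i| ≤ 4 * n / ρ * dist x y := by
  obtain ⟨a, ha₀, haρ, hazero, haU, halip⟩ :=
    exists_lipschitz_weights_subordinate hn U hVU hmult hρ hleb
  refine ⟨fun x => sumNormalize (a x),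
    fun x => sumNormalize_mem_stdSimplex (ha₀ x) (hρ.trans_le (haρ x)),
    fun x => (hazero x).imp fun i hi => by simp [sumNormalize, hi],
    fun x i hpos => haU x i ((div_pos_iff_of_pos_right (hρ.trans_le (haρ x))).1 hpos),
    fun x y => ?_⟩
  calc ∑ i, |sumNormalize (a x) i - sumNormalize (a y) i|
      ≤ 2 / ρ * ∑ i, |a x i - a y i| := sum_abs_sumNormalize_sub_le (ha₀ y) hρ (haρ x) (haρ y)
    _ ≤ 2 / ρ * (2 * n * dist x y) := by gcongr; exact halip x y
    _ = 4 * n / ρ * dist x y := by ring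

end PartitionOfUnity

theorem exists_boundary_map_of_lebesgue_refinement {X : Type*} [MetricSpace X] {ι : Type*}
    [Fintype ι] [Nonempty ι] {n : ℕ} (hn : n < Fintype.card ι) {h : X → ι → ℝ}
    (hh : ∀ x, h x ∈ stdSimplex ℝ ι) {L : ℝ} (hL : 0 ≤ L)
    (hlip : ∀ x y, ∑ i, |h x i - h y i| ≤ L * dist x y) {q r ρ : ℝ} (hq : 0 < q)
    (hqι : 12 * q * Fintype.card ι ≤ 1) (hLr : L * r ≤ q) (hρ : 0 < ρ)
    (hcov : ∀ U : ι → Set X, (∀ x, ∃ i, ball x r ⊆ U i) → ∃ V : Set (Set X),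
      (∀ W ∈ V, ∃ i, W ⊆ U i) ∧ MultiplicityLE V n ∧ ∀ x, ∃ W ∈ V, ball x ρ ⊆ W) :
    ∃ p : X → ι → ℝ, (∀ x, p x ∈ stdSimplex ℝ ι ∧ ∃ i, p x i = 0) ∧
      (∀ x, minCoord (h x) = 0 → p x = h x) ∧
      ∀ x y, ∑ i, |p x i - p y i| ≤
        ((3 * (Fintype.card ι + 1) + 2 / q) * L + 4 * n / ρ) * dist x y := by
  obtain ⟨V, hVU, hmult, hleb⟩ :=
    hcov _ (exists_ball_subset_simplexCover hqι hh hL hLr hlip)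
  obtain ⟨ν, hνΔ, hν₀, hνU, hνlip⟩ :=
    exists_lipschitz_partition_subordinate hn _ hVU hmult hρ hleb
  refine ⟨fun x => blend q (h x) (ν x),
    fun x => ⟨blend_mem_stdSimplex hqι (hh x) (hνΔ x),
      exists_blend_apply_eq_zero hq (hνΔ x).1 (hν₀ x) (hνU x)⟩,
    fun x hx => blend_eq_self hq (hh x) hx _, fun x y => ?_⟩
  calc ∑ i, |blend q (h x) (ν x) i - blend q (h y) (ν y) i|
      ≤ (3 * (Fintype.card ι + 1) + 2 / q) * ∑ i, |h x i - h y i| + ∑ i, |ν x i - ν y i| :=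
        sum_abs_blend_sub_le hq hqι (hh x) (hh y) (hνΔ y)
    _ ≤ (3 * (Fintype.card ι + 1) + 2 / q) * (L * dist x y) + 4 * n / ρ * dist x y := by
        gcongr
        exacts [hlip x y, hνlip x y]
    _ = _ := by ring

instance (m : ℕ) : Nontrivial (stdSimplexL1 m) :=
  ⟨⟨⟨WithLp.toLp 1 (Pi.single 0 1), single_mem_stdSimplex ℝ 0⟩,
    ⟨WithLp.toLp 1 (Pi.single 1 1), single_mem_stdSimplex ℝ 1⟩, fun h => by
      simpa using congrArg (fun z : stdSimplexL1 m => WithLp.ofLp z.1 0) h⟩⟩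

theorem one_le_of_forall_lipschitz_extension {X Y : Type*} [MetricSpace X] [MetricSpace Y]
    [Nontrivial Y] {s : ℝ} (hext : ∀ A : Set X, A.Nonempty → ∀ lam : ℝ, 0 < lam →
      ∀ f : A → Y, (∀ a b : A, dist (f a) (f b) ≤ lam * dist (a : X) (b : X)) →
      ∃ g : X → Y, (∀ a : A, g a = f a) ∧ ∀ x y : X, dist (g x) (g y) ≤ s * lam * dist x y)
    {x₀ x₁ : X} (hx : x₀ ≠ x₁) : 1 ≤ s := by
  classical
  obtain ⟨y₀, y₁, hy⟩ := exists_pair_ne Y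
  have hdx : 0 < dist x₀ x₁ := dist_pos.2 hx
  have hdy : 0 < dist y₀ y₁ := dist_pos.2 hy
  let f : ({x₀, x₁} : Set X) → Y := fun a => if (a : X) = x₀ then y₀ else y₁
  have hf : ∀ a b, dist (f a) (f b) ≤ dist y₀ y₁ / dist x₀ x₁ * dist (a : X) (b : X) := by
    rintro ⟨a, rfl | rfl⟩ ⟨b, rfl | rfl⟩ <;>
      simp [f, hx.symm, dist_comm, div_mul_cancel₀ _ hdx.ne']
  obtain ⟨g, hgf, hg⟩ := hext _ (Set.insert_nonempty _ _) _ (div_pos hdy hdx) f hf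
  have h01 := hg x₀ x₁
  rw [hgf ⟨x₀, by simp⟩, hgf ⟨x₁, by simp⟩] at h01
  simp only [f, if_pos, if_neg hx.symm, mul_assoc, div_mul_cancel₀ _ hdx.ne'] at h01
  nlinarith

theorem lebesgue_scale_mem_Ioo {m : ℕ} {s r₁ r₂ lam : ℝ} (hs : 0 < s) (hr₁ : 0 < r₁)
    (hr : r₁ < r₂) (hlam₁ : 1 / (12 * s * r₂ * ((m : ℝ) + 2)) < lam)
    (hlam₂ : lam < 1 / (12 * s * r₁ * ((m : ℝ) + 2))) :
    0 < lam ∧ 1 / (12 * ((m : ℝ) + 2)) / (s * lam) ∈ Ioo r₁ r₂ := by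
  have hr₂ : 0 < r₂ := hr₁.trans hr
  have hlam : 0 < lam := lt_trans (by positivity) hlam₁
  rw [lt_div_iff₀ (by positivity)] at hlam₂
  rw [div_lt_iff₀ (by positivity)] at hlam₁
  refine ⟨hlam, ?_, ?_⟩
  · rw [lt_div_iff₀ (by positivity), lt_div_iff₀ (by positivity)]
    linarith
  · rw [div_lt_iff₀ (by positivity), div_lt_iff₀ (by positivity)]
    linarith

theorem boundary_lipschitz_constant_le {m : ℕ} {s t lam : ℝ} (hs : 1 ≤ s) (ht : 0 < t)
    (hlam : 0 < lam) :
    (3 * ((m : ℝ) + 2 + 1) + 2 / (1 / (12 * ((m : ℝ) + 2)))) * (s * lam) +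
        4 * ((m : ℝ) + 1) / (t * (1 / (12 * ((m : ℝ) + 2)) / (s * lam))) ≤
      (50 * ((m : ℝ) + 2) ^ 2 * s + 150 * s ^ 2 * ((m : ℝ) + 2) ^ 5 / t) * lam := by
  have hm : (0 : ℝ) ≤ m := m.cast_nonneg
  have hblend : (3 * ((m : ℝ) + 2 + 1) + 2 / (1 / (12 * ((m : ℝ) + 2)))) * (s * lam) ≤
      50 * ((m : ℝ) + 2) ^ 2 * s * lam :=
    calc _ = (27 * (m : ℝ) + 57) * (s * lam) := by rw [div_div_eq_mul_div, div_one]; ring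
      _ ≤ 50 * ((m : ℝ) + 2) ^ 2 * (s * lam) := by gcongr; nlinarith
      _ = _ := by ring
  have hpartition : 4 * ((m : ℝ) + 1) / (t * (1 / (12 * ((m : ℝ) + 2)) / (s * lam))) ≤
      150 * s ^ 2 * ((m : ℝ) + 2) ^ 5 * lam / t := by
    have hpow : ((m : ℝ) + 1) * ((m : ℝ) + 2) ≤ ((m : ℝ) + 2) ^ 5 :=
      calc ((m : ℝ) + 1) * ((m : ℝ) + 2) ≤ ((m : ℝ) + 2) ^ 2 := by nlinarith
        _ ≤ ((m : ℝ) + 2) ^ 5 := pow_le_pow_right₀ (by linarith) (by norm_num)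
    calc _ = 48 * (((m : ℝ) + 1) * ((m : ℝ) + 2)) * s * lam / t := by field_simp; ring
      _ ≤ 150 * ((m : ℝ) + 2) ^ 5 * s ^ 2 * lam / t := by gcongr <;> nlinarith
      _ = _ := by ring
  calc _ ≤ 50 * ((m : ℝ) + 2) ^ 2 * s * lam + 150 * s ^ 2 * ((m : ℝ) + 2) ^ 5 * lam / t :=
        add_le_add hblend hpartition
    _ = _ := by ring


theorem boundary_extension_of_lebesgue_refinements
    {X : Type*} [MetricSpace X] (m : ℕ) (t s r₁ r₂ : ℝ)
    (ht : 0 < t) (hr₁ : 0 < r₁) (hr : r₁ < r₂) (hs : 0 < s)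
    (hsimp : ∀ A : Set X, A.Nonempty → ∀ lam : ℝ, 0 < lam →
      ∀ f : A → stdSimplexL1 m,
        (∀ a b : A, dist (f a) (f b) ≤ lam * dist (a : X) (b : X)) →
        ∃ g : X → stdSimplexL1 m, (∀ a : A, g a = f a) ∧
          ∀ x y : X, dist (g x) (g y) ≤ s * lam * dist x y)
    (hcov : ∀ r : ℝ, r₁ < r → r < r₂ →
      ∀ U : Fin (m + 2) → Set X, (∀ x : X, ∃ i, Metric.ball x r ⊆ U i) →
        ∃ V : Set (Set X),
          (∀ W ∈ V, ∃ i, W ⊆ U i) ∧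
          MultiplicityLE V (m + 1) ∧
          (∀ x : X, ∃ W ∈ V, Metric.ball x (t * r) ⊆ W)) :
    ∀ lam : ℝ, 1 / (12 * s * r₂ * ((m : ℝ) + 2)) < lam → lam < 1 / (12 * s * r₁ * ((m : ℝ) + 2)) →
      ∀ A : Set X, A.Nonempty →
        ∀ f : A → boundarySimplexL1 m,
          (∀ a b : A, dist (f a) (f b) ≤ lam * dist (a : X) (b : X)) →
          ∃ g : X → boundarySimplexL1 m, (∀ a : A, g a = f a) ∧
            ∀ x y : X, dist (g x) (g y) ≤
              (50 * ((m : ℝ) + 2) ^ 2 * s + 150 * s ^ 2 * ((m : ℝ) + 2) ^ 5 / t) * lam *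
                dist x y := by
  intro lam hlam₁ hlam₂ A hA f hf
  obtain ⟨hlam, hr₁r, hrr₂⟩ := lebesgue_scale_mem_Ioo hs hr₁ hr hlam₁ hlam₂
  set q : ℝ := 1 / (12 * ((m : ℝ) + 2))
  set r : ℝ := q / (s * lam)
  obtain ⟨g, hgA, hg⟩ := hsimp A hA lam hlam (fun a => ⟨f a, (f a).2.1⟩) hf
  obtain ⟨p, hp, hpA, hplip⟩ := exists_boundary_map_of_lebesgue_refinement (n := m + 1)
    (h := fun x => WithLp.ofLp (g x).1) (L := s * lam) (q := q) (r := r) (ρ := t * r) (by simp)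
    (fun x => (g x).2) (by positivity)
    (fun x y => by simpa [Subtype.dist_eq, PiLp.dist_eq_sum_abs_of_L1] using hg x y)
    (by positivity) (le_of_eq (by simp [q]; field_simp)) (le_of_eq (by simp only [r]; field_simp))
    (mul_pos ht (hr₁.trans hr₁r)) (hcov r hr₁r hrr₂)
  refine ⟨fun x => ⟨WithLp.toLp 1 (p x), hp x⟩, fun a => Subtype.ext ?_, fun x y => ?_⟩
  · have hga : WithLp.ofLp (g a).1 = WithLp.ofLp (f a).1 :=
      congrArg (fun z => WithLp.ofLp z.1) (hgA a)
    obtain ⟨i, hi⟩ := (f a).2.2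
    simp only [hpA a (by rw [hga]; exact minCoord_eq_zero (f a).2.1.1 hi), hga, WithLp.toLp_ofLp]
  · rw [Subtype.dist_eq, PiLp.dist_eq_sum_abs_of_L1]
    refine (hplip x y).trans ?_
    rcases eq_or_ne x y with rfl | hxy
    · simp
    gcongr
    simpa [q, r] using boundary_lipschitz_constant_le
      (one_le_of_forall_lipschitz_extension hsimp hxy) ht hlam
end

section
/- Let X be a metric space, n ≥ 0 an integer, 0 < t < 1, and r₂ > r₁ > 0. If every r-Lebesgue cover U = {U_0,…,U_{n+1}} of X by n+2 subsets with r₁ < r < r₂ admits a (4t·r)-Lebesgue refinement V of multiplicity at most n+1, then every s-Lebesgue cover W = {W_0,…,W_{n+2}} of X by n+3 subsets with 4r₁ < s < 4r₂ admits a (t·s)-Lebesgue refinement of multiplicity at most n+2. -/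
/-!
Shrink each `W i` to the `s / 4`-neighbourhood of its `s`-deep part `{z | ball z s ⊆ W i}` and
merge the last two shrunken sets: this is an `s / 4`-Lebesgue cover by `n + 2` sets, so the
hypothesis at `r = s / 4` refines it by a `t s`-Lebesgue family of multiplicity at most `n + 1`.
Label every point `x` by an `i` such that `x` lies in the shrunken `W i` and that set is merged
into a member of the refinement containing `ball x (t s)`; the new cover consists of the unions
of the balls `ball x (t s)` with a common label. Distinct labels seen at a point come from
distinct members of the refinement, except for the two merged labels, so the multiplicity grows
by at most one.

The two-set covers `{a}ᶜ`, `ball a (2 r)` show that the hypothesis forces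
`ball a (t s) ⊆ ball a (s / 2)`, which keeps the balls labelled `i` inside `W i` for every `t`.
-/

open Metric Set

theorem Set.ncard_le_ncard_image_add_one {α β : Type*} {s : Set α} {f : α → β} {a : α}
    (hf : InjOn f {a}ᶜ) (hs : s.Finite) : s.ncard ≤ (f '' s).ncard + 1 := by
  calc s.ncard ≤ (s \ {a}).ncard + ({a} : Set α).ncard := ncard_le_ncard_sdiff_add_ncard s {a}
    _ = (f '' (s \ {a})).ncard + 1 := by
      rw [(hf.mono fun x hx => hx.2).ncard_image, ncard_singleton]
    _ ≤ (f '' s).ncard + 1 := by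
      gcongr
      exacts [hs.image f, sdiff_subset]

theorem Fin.injOn_predAbove_last {n : ℕ} :
    InjOn (Fin.predAbove (Fin.last n)) {Fin.last (n + 1)}ᶜ :=
  fun i (hi : i ≠ _) j (hj : j ≠ _) hij => by
    rwa [predAbove_last_of_ne_last hi, predAbove_last_of_ne_last hj, castPred_inj] at hij

section LebesgueCover

variable {X : Type*} [MetricSpace X] {ι κ : Type*}

def IsLebesgueCover (U : ι → Set X) (r : ℝ) : Prop :=
  ∀ x, ∃ i, ball x r ⊆ U i

theorem isLebesgueCover_of_refinement {U : ι → Set X} {V : Set (Set X)} {R : ℝ}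
    (hVU : ∀ Z ∈ V, ∃ i, Z ⊆ U i) (hV : ∀ x, ∃ Z ∈ V, ball x R ⊆ Z) :
    IsLebesgueCover U R := fun x => by
  obtain ⟨Z, hZV, hxZ⟩ := hV x
  obtain ⟨i, hZU⟩ := hVU Z hZV
  exact ⟨i, hxZ.trans hZU⟩

theorem ball_subset_ball_two_mul_of_isLebesgueCover_imp [Nontrivial ι] {r R : ℝ}
    (h : ∀ U : ι → Set X, IsLebesgueCover U r → IsLebesgueCover U R) (a : X) :
    ball a R ⊆ ball a (2 * r) := by
  classical
  obtain ⟨i, j, hij⟩ := exists_pair_ne ι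
  set U : ι → Set X := fun k => if k = i then {a}ᶜ else ball a (2 * r)
  have hU : IsLebesgueCover U r := fun z => by
    by_cases hz : dist z a < r
    · refine ⟨j, fun w hw => ?_⟩
      simp only [U, if_neg hij.symm, mem_ball] at hw ⊢
      linarith [dist_triangle w z a]
    · refine ⟨i, fun w hw => ?_⟩
      simp only [U, if_pos, mem_compl_iff, mem_singleton_iff, mem_ball] at hw ⊢
      rintro rfl
      exact hz (dist_comm z w ▸ hw)
  obtain ⟨k, hk⟩ := h U hU a
  intro w hw
  have haU : a ∈ U k := hk (mem_ball_self (pos_of_mem_ball hw))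
  by_cases hki : k = i
  · simp [U, hki] at haU
  · simpa [U, hki] using hk hw

theorem ball_subset_of_mem_thickening {U : Set X} {x : X} {s δ ρ : ℝ} (hδρ : δ + ρ ≤ s)
    (hx : x ∈ thickening δ {z | ball z s ⊆ U}) : ball x ρ ⊆ U := by
  obtain ⟨z, hzU, hxz⟩ := mem_thickening_iff.mp hx
  intro w hw
  apply hzU
  rw [mem_ball] at hw ⊢
  linarith [dist_triangle w x z]

def mergedCover (π : ι → κ) (W : ι → Set X) (s δ : ℝ) (k : κ) : Set X :=
  ⋃ (i) (_ : π i = k), thickening δ {z | ball z s ⊆ W i}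

theorem IsLebesgueCover.mergedCover {W : ι → Set X} {s : ℝ} (hW : IsLebesgueCover W s)
    (π : ι → κ) (δ : ℝ) : IsLebesgueCover (mergedCover π W s δ) δ := fun x => by
  obtain ⟨i, hi⟩ := hW x
  refine ⟨π i, (ball_subset_thickening (E := {z | ball z s ⊆ W i}) hi δ).trans ?_⟩
  exact subset_biUnion_of_mem (u := fun i => thickening δ {z | ball z s ⊆ W i}) rfl


theorem exists_refinement_of_labelling [Finite ι] {W : ι → Set X} {R : ℝ} {m : ℕ}
    (φ : X → ι) (hφ : ∀ x, ball x R ⊆ W (φ x)) (hm : ∀ w, (φ '' ball w R).ncard ≤ m) :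
    ∃ V : Set (Set X), (∀ Z ∈ V, ∃ i, Z ⊆ W i) ∧ MultiplicityLE V m ∧
      ∀ x, ∃ Z ∈ V, ball x R ⊆ Z := by
  set Y : ι → Set X := fun i => ⋃ (x) (_ : φ x = i), ball x R
  have hY : ∀ x, ball x R ⊆ Y (φ x) := fun x =>
    subset_biUnion_of_mem (u := fun x : X => ball x R) rfl
  refine ⟨range Y, ?_, fun w => ⟨(finite_range Y).subset fun Z hZ => hZ.1, ?_⟩, ?_⟩
  · rintro _ ⟨i, rfl⟩
    exact ⟨i, iUnion₂_subset fun x hx => hx ▸ hφ x⟩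
  · calc {Z | Z ∈ range Y ∧ w ∈ interior Z}.ncard ≤ (Y '' (φ '' ball w R)).ncard := by
          refine ncard_le_ncard ?_ (toFinite _)
          rintro _ ⟨⟨i, rfl⟩, hw⟩
          obtain ⟨x, rfl, hwx⟩ := mem_iUnion₂.mp (interior_subset hw)
          exact mem_image_of_mem Y ⟨x, mem_ball_comm.mp hwx, rfl⟩
      _ ≤ m := (ncard_image_le (toFinite _)).trans (hm w)
  · exact fun x => ⟨Y (φ x), mem_range_self _, hY x⟩

theorem exists_labelling_of_refines_mergedCover {π : ι → κ} {W : ι → Set X} {s δ ρ R : ℝ}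
    {m : ℕ} {V : Set (Set X)} (σ : Set X → κ) (hσ : ∀ Z ∈ V, Z ⊆ mergedCover π W s δ (σ Z))
    (hm : MultiplicityLE V m) (hV : ∀ x : X, ∃ Z ∈ V, ball x R ⊆ Z) (hR : 0 < R)
    (hRρ : ∀ x : X, ball x R ⊆ ball x ρ) (hδρ : δ + ρ ≤ s) :
    ∃ φ : X → ι, (∀ x, ball x R ⊆ W (φ x)) ∧ ∀ w, (π '' (φ '' ball w R)).ncard ≤ m := by
  choose Z hZV hZ using hV
  have hlabel : ∀ x, ∃ i, π i = σ (Z x) ∧ x ∈ thickening δ {z | ball z s ⊆ W i} := fun x => by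
    simpa [mergedCover] using hσ _ (hZV x) (hZ x (mem_ball_self hR))
  choose φ hπφ hφ using hlabel
  refine ⟨φ, fun x => (hRρ x).trans (ball_subset_of_mem_thickening hδρ (hφ x)), fun w => ?_⟩
  obtain ⟨hfin, hcard⟩ := hm w
  calc (π '' (φ '' ball w R)).ncard ≤ (σ '' {Z | Z ∈ V ∧ w ∈ interior Z}).ncard := by
        refine ncard_le_ncard ?_ (hfin.image σ)
        rintro _ ⟨_, ⟨x, hx, rfl⟩, rfl⟩
        refine ⟨Z x, ⟨hZV x, ?_⟩, (hπφ x).symm⟩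
        exact interior_maximal (hZ x) isOpen_ball (mem_ball_comm.mp hx)
    _ ≤ m := (ncard_image_le hfin).trans hcard

end LebesgueCover

theorem lebesgue_refinement_step_general
    {X : Type*} [MetricSpace X] (n : ℕ) (t r₁ r₂ : ℝ)
    (ht0 : 0 < t) (hr₁ : 0 < r₁)
    (h : ∀ r : ℝ, r₁ < r → r < r₂ →
      ∀ U : Fin (n + 2) → Set X, (∀ x : X, ∃ i, Metric.ball x r ⊆ U i) →
        ∃ V : Set (Set X),
          (∀ W ∈ V, ∃ i, W ⊆ U i) ∧
          MultiplicityLE V (n + 1) ∧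
          (∀ x : X, ∃ W ∈ V, Metric.ball x (4 * t * r) ⊆ W)) :
    ∀ s : ℝ, 4 * r₁ < s → s < 4 * r₂ →
      ∀ W : Fin (n + 3) → Set X, (∀ x : X, ∃ i, Metric.ball x s ⊆ W i) →
        ∃ V : Set (Set X),
          (∀ Z ∈ V, ∃ i, Z ⊆ W i) ∧
          MultiplicityLE V (n + 2) ∧
          (∀ x : X, ∃ Z ∈ V, Metric.ball x (t * s) ⊆ Z) := by
  intro s hs₁ hs₂ W hW
  have hr₁s : r₁ < s / 4 := by linarith
  have hsr₂ : s / 4 < r₂ := by linarith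
  have hR : 4 * t * (s / 4) = t * s := by ring
  have hball : ∀ x : X, ball x (t * s) ⊆ ball x (2 * (s / 4)) :=
    ball_subset_ball_two_mul_of_isLebesgueCover_imp (ι := Fin (n + 2)) fun U hU => by
      obtain ⟨V, hVU, -, hV⟩ := h _ hr₁s hsr₂ U hU
      exact hR ▸ isLebesgueCover_of_refinement hVU hV
  obtain ⟨V, hVW, hVm, hV⟩ := h _ hr₁s hsr₂ _
    (IsLebesgueCover.mergedCover hW (Fin.predAbove (Fin.last (n + 1))) (s / 4))
  choose! σ hσ using hVW
  obtain ⟨φ, hφW, hφm⟩ := exists_labelling_of_refines_mergedCover σ hσ hVm (hR ▸ hV)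
    (mul_pos ht0 (by linarith)) hball (by linarith)
  exact exists_refinement_of_labelling φ hφW fun w =>
    (ncard_le_ncard_image_add_one Fin.injOn_predAbove_last (toFinite _)).trans
      (Nat.add_le_add_right (hφm w) 1)

theorem lebesgue_refinement_step
    {X : Type*} [MetricSpace X] (n : ℕ) (t r₁ r₂ : ℝ)
    (ht0 : 0 < t) (ht1 : t < 1) (hr₁ : 0 < r₁) (hr : r₁ < r₂)
    (h : ∀ r : ℝ, r₁ < r → r < r₂ →
      ∀ U : Fin (n + 2) → Set X, (∀ x : X, ∃ i, Metric.ball x r ⊆ U i) →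
        ∃ V : Set (Set X),
          (∀ W ∈ V, ∃ i, W ⊆ U i) ∧
          MultiplicityLE V (n + 1) ∧
          (∀ x : X, ∃ W ∈ V, Metric.ball x (4 * t * r) ⊆ W)) :
    ∀ s : ℝ, 4 * r₁ < s → s < 4 * r₂ →
      ∀ W : Fin (n + 3) → Set X, (∀ x : X, ∃ i, Metric.ball x s ⊆ W i) →
        ∃ V : Set (Set X),
          (∀ Z ∈ V, ∃ i, Z ⊆ W i) ∧
          MultiplicityLE V (n + 2) ∧
          (∀ x : X, ∃ Z ∈ V, Metric.ball x (t * s) ⊆ Z) :=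
  lebesgue_refinement_step_general n t r₁ r₂ ht0 hr₁ h
end

section
/- Let Δ be a nonempty closed convex subset of ℝⁿ, equipped with either the ℓ¹ metric d₁(x,y) = Σ_{i=1}^n |x_i − y_i| or the Euclidean metric d₂(x,y) = (Σ_{i=1}^n (x_i − y_i)²)^{1/2}. For any metric space X and any λ-Lipschitz map f : A → Δ defined on a nonempty subset A ⊆ X, there exists an (n²·λ)-Lipschitz map f̃ : X → Δ extending f. -/
/-!
Extend each coordinate of `f` by McShane's theorem: this gives a `λ`-Lipschitz map `X → ℝⁿ` for
the sup metric, and passing to the Euclidean metric costs at most a factor `n`. The nearest-point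
projection onto the closed convex set `Δ` (read in Euclidean coordinates) is `1`-Lipschitz and
fixes `Δ`, so composing with it lands in `Δ` without changing the values on `A`. Returning to the
`ℓᵖ` metric costs at most another factor `n`.
-/

open Set
open scoped NNReal ENNReal RealInnerProductSpace

lemma PiLp.lipschitzWith_toLp_card (p : ℝ≥0∞) [Fact (1 ≤ p)] {ι : Type*} [Fintype ι]
    (β : ι → Type*) [∀ i, PseudoEMetricSpace (β i)] :
    LipschitzWith (Fintype.card ι) (@WithLp.toLp p (∀ i, β i)) := by
  rcases isEmpty_or_nonempty ι with hι | hι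
  · intro x y
    rw [Subsingleton.elim x y, edist_self]
    exact bot_le
  · refine (PiLp.lipschitzWith_toLp p β).weaken ?_
    have hexp : (1 / p).toReal ≤ 1 :=
      ENNReal.toReal_le_of_le_ofReal zero_le_one
        (by simpa using ENNReal.inv_le_one.2 (Fact.out : 1 ≤ p))
    calc (Fintype.card ι : ℝ≥0) ^ (1 / p).toReal ≤ (Fintype.card ι : ℝ≥0) ^ (1 : ℝ) :=
          NNReal.rpow_le_rpow_of_exponent_le (by exact_mod_cast Fintype.card_pos) hexp
      _ = Fintype.card ι := NNReal.rpow_one _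

section MetricProjection

variable {F : Type*} [NormedAddCommGroup F] [InnerProductSpace ℝ F]

lemma norm_sub_le_of_inner_nonpos {u v p q : F} (hu : ⟪u - p, q - p⟫ ≤ 0)
    (hv : ⟪v - q, p - q⟫ ≤ 0) : ‖p - q‖ ≤ ‖u - v‖ := by
  have hsq : ‖p - q‖ ^ 2 ≤ ‖u - v‖ * ‖p - q‖ :=
    calc ‖p - q‖ ^ 2 ≤ ‖p - q‖ ^ 2 - ⟪u - p, q - p⟫ - ⟪v - q, p - q⟫ := by linarith
      _ = ⟪u - v, p - q⟫ := by
        rw [← real_inner_self_eq_norm_sq]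
        simp only [inner_sub_left, inner_sub_right]
        rw [real_inner_comm p q, real_inner_comm p u, real_inner_comm q v]
        ring
      _ ≤ ‖u - v‖ * ‖p - q‖ := real_inner_le_norm _ _
  nlinarith [norm_nonneg (p - q), norm_nonneg (u - v)]

theorem Convex.exists_lipschitzWith_one_retraction {Δ : Set F} (hconv : Convex ℝ Δ)
    (hne : Δ.Nonempty) (hc : IsComplete Δ) :
    ∃ r : F → F, LipschitzWith 1 r ∧ (∀ u, r u ∈ Δ) ∧ ∀ u ∈ Δ, r u = u := by
  choose r hrΔ hrmin using exists_norm_eq_iInf_of_complete_convex hne hc hconv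
  have hvar : ∀ u, ∀ w ∈ Δ, ⟪u - r u, w - r u⟫ ≤ 0 := fun u =>
    (norm_eq_iInf_iff_real_inner_le_zero hconv (hrΔ u)).1 (hrmin u)
  refine ⟨r, LipschitzWith.mk_one fun u v => ?_, hrΔ, fun u hu => ?_⟩
  · simpa only [dist_eq_norm] using
      norm_sub_le_of_inner_nonpos (hvar u _ (hrΔ v)) (hvar v _ (hrΔ u))
  · exact (sub_eq_zero.1 (real_inner_self_nonpos.1 (hvar u u hu))).symm

end MetricProjection

theorem Convex.exists_lipschitzWith_extension_piLp {p : ℝ≥0∞} [Fact (1 ≤ p)] {ι : Type*}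
    [Fintype ι] {Δ : Set (PiLp p fun _ : ι => ℝ)} (hconv : Convex ℝ Δ) (hne : Δ.Nonempty)
    (hcl : IsClosed Δ) {X : Type*} [PseudoMetricSpace X] {A : Set X}
    {f : X → PiLp p fun _ : ι => ℝ} {K : ℝ≥0} (hf : LipschitzOnWith K f A) (hfΔ : MapsTo f A Δ) :
    ∃ g : X → PiLp p (fun _ : ι => ℝ), LipschitzWith (Fintype.card ι ^ 2 * K) g ∧
      EqOn g f A ∧ ∀ x, g x ∈ Δ := by
  set L : EuclideanSpace ℝ ι ≃L[ℝ] PiLp p fun _ : ι => ℝ :=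
    (PiLp.continuousLinearEquiv 2 ℝ _).trans (PiLp.continuousLinearEquiv p ℝ _).symm
  obtain ⟨r, hr, hrΔ, hr_fix⟩ :=
    (hconv.linear_preimage L.toLinearMap).exists_lipschitzWith_one_retraction
      ⟨L.symm hne.some, by simpa using hne.some_mem⟩ (hcl.preimage L.continuous).isComplete
  obtain ⟨G, hG, hGf⟩ := ((PiLp.lipschitzWith_ofLp p _).comp_lipschitzOnWith hf).extend_pi
  refine ⟨fun x => L (r (WithLp.toLp 2 (G x))), ?_, fun a ha => ?_, fun x => hrΔ _⟩
  · have hlip := (PiLp.lipschitzWith_toLp_card p _).comp ((PiLp.lipschitzWith_ofLp 2 _).comp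
      (hr.comp ((PiLp.lipschitzWith_toLp_card 2 _).comp hG)))
    exact hlip.weaken (le_of_eq (by ring))
  · have hGa : WithLp.toLp 2 (G a) = L.symm (f a) := by
      rw [← hGf ha]
      rfl
    change L (r (WithLp.toLp 2 (G a))) = f a
    rw [hGa, hr_fix _ (by simpa using hfΔ ha), L.apply_symm_apply]

theorem Convex.exists_lipschitz_extension_piLp_subtype {p : ℝ≥0∞} [Fact (1 ≤ p)] {ι : Type*}
    [Fintype ι] {Δ : Set (PiLp p fun _ : ι => ℝ)} (hconv : Convex ℝ Δ) (hne : Δ.Nonempty)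
    (hcl : IsClosed Δ) {X : Type*} [PseudoMetricSpace X] {A : Set X} {lam : ℝ} (hlam : 0 ≤ lam)
    (f : A → Δ) (hf : ∀ a b : A, dist (f a) (f b) ≤ lam * dist (a : X) (b : X)) :
    ∃ g : X → Δ, (∀ a : A, g a = f a) ∧
      ∀ x y : X, dist (g x) (g y) ≤ (Fintype.card ι : ℝ) ^ 2 * lam * dist x y := by
  set F : X → PiLp p fun _ : ι => ℝ := Function.extend (↑) (fun a => (f a : PiLp p _)) 0
  have hF : ∀ a : A, F a = f a := Subtype.val_injective.extend_apply _ _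
  have hF_lip : LipschitzOnWith lam.toNNReal F A :=
    LipschitzOnWith.of_dist_le' fun x hx y hy => by
      simpa only [hF ⟨x, hx⟩, hF ⟨y, hy⟩, Subtype.dist_eq] using hf ⟨x, hx⟩ ⟨y, hy⟩
  obtain ⟨g, hg, hgF, hgΔ⟩ :=
    hconv.exists_lipschitzWith_extension_piLp hne hcl hF_lip fun a ha => by
      simpa only [hF ⟨a, ha⟩] using (f ⟨a, ha⟩).2
  refine ⟨fun x => ⟨g x, hgΔ x⟩, fun a => Subtype.ext ((hgF a.2).trans (hF a)), fun x y => ?_⟩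
  simpa [Subtype.dist_eq, Real.coe_toNNReal _ hlam] using hg.dist_le_mul x y

/-- Any `λ`-Lipschitz map of a nonempty subset of a metric space `X` into a nonempty closed
convex subset `Δ` of `ℝⁿ`, equipped with either the `ℓ¹`-metric or the Euclidean (`ℓ²`) metric,
extends to an `(n²·λ)`-Lipschitz map of `X` into `Δ`. -/
theorem convex_subset_lipschitz_extension (n : ℕ) :
    (∀ Δ : Set (PiLp 1 fun _ : Fin n => ℝ), Δ.Nonempty → IsClosed Δ → Convex ℝ Δ →
      ∀ (X : Type*) [MetricSpace X], ∀ A : Set X, A.Nonempty → ∀ lam : ℝ, 0 ≤ lam →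
        ∀ f : A → Δ, (∀ a b : A, dist (f a) (f b) ≤ lam * dist (a : X) (b : X)) →
          ∃ g : X → Δ, (∀ a : A, g a = f a) ∧
            ∀ x y : X, dist (g x) (g y) ≤ (n : ℝ) ^ 2 * lam * dist x y) ∧
    (∀ Δ : Set (EuclideanSpace ℝ (Fin n)), Δ.Nonempty → IsClosed Δ → Convex ℝ Δ →
      ∀ (X : Type*) [MetricSpace X], ∀ A : Set X, A.Nonempty → ∀ lam : ℝ, 0 ≤ lam →
        ∀ f : A → Δ, (∀ a b : A, dist (f a) (f b) ≤ lam * dist (a : X) (b : X)) →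
          ∃ g : X → Δ, (∀ a : A, g a = f a) ∧
            ∀ x y : X, dist (g x) (g y) ≤ (n : ℝ) ^ 2 * lam * dist x y) :=
  ⟨fun _ hne hcl hconv _ _ _ _ _ hlam f hf => by
    simpa using hconv.exists_lipschitz_extension_piLp_subtype hne hcl hlam f hf,
  fun _ hne hcl hconv _ _ _ _ _ hlam f hf => by
    simpa using hconv.exists_lipschitz_extension_piLp_subtype hne hcl hlam f hf⟩
end

section
/- Let X be a metric space and n ≥ 0 an integer. If S^n is a large scale Lipschitz extensor of X, then S^{n+1} is also a large scale Lipschitz extensor of X. -/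
/-!
Let `f : A → S^{n+1}` be `λ`-Lipschitz with `λ` small. Write `ℝ^{n+2} = ℝ^{n+1} × ℝ` and extend
`f` coordinatewise (McShane) to an `O(λ)`-Lipschitz map `F : X → ℝ^{n+2}`, which may pass through
`0`. Where `f` stays away from the poles its horizontal part normalizes to a `16λ`-Lipschitz map
into `S^n`, which the hypothesis extends to `v : X → S^n`. The point `G x` with the clamped height
of `F x` and horizontal part of length `≈ ‖(F x).fst‖` in the direction `v x` is bounded away from
`0` everywhere, and is close to `F x` near `A`. Interpolating from `G` to `F` with a cutoff of
scale `~1/λ` around `A` gives an `O(λ)`-Lipschitz map that is bounded away from `0` and equals `f`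
on `A`; its normalization is the required extension.
-/

/-- A metric space `E` is a large scale Lipschitz extensor of `X`: there are `C, M > 0` such
that every `λ`-Lipschitz map on a nonempty subset of `X` with `0 < λ < M` extends to a
`(C·λ)`-Lipschitz map on `X`. -/
def LargeScaleLipschitzExtensorOf (X E : Type*) [MetricSpace X] [MetricSpace E] : Prop :=
  ∃ C : ℝ, 0 < C ∧ ∃ M : ℝ, 0 < M ∧ ∀ A : Set X, A.Nonempty →
    ∀ lam : ℝ, 0 < lam → lam < M →
      ∀ f : A → E, (∀ a b : A, dist (f a) (f b) ≤ lam * dist (a : X) (b : X)) →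
        ∃ g : X → E, (∀ a : A, g a = f a) ∧
          ∀ x y : X, dist (g x) (g y) ≤ C * lam * dist x y

/-- A metric space `E` is a small scale Lipschitz extensor of `X`: there are `C, M > 0` such
that every `λ`-Lipschitz map on a nonempty subset of `X` with `λ > M` extends to a
`(C·λ)`-Lipschitz map on `X`. -/
def SmallScaleLipschitzExtensorOf (X E : Type*) [MetricSpace X] [MetricSpace E] : Prop :=
  ∃ C : ℝ, 0 < C ∧ ∃ M : ℝ, 0 < M ∧ ∀ A : Set X, A.Nonempty →
    ∀ lam : ℝ, M < lam →
      ∀ f : A → E, (∀ a b : A, dist (f a) (f b) ≤ lam * dist (a : X) (b : X)) →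
        ∃ g : X → E, (∀ a : A, g a = f a) ∧
          ∀ x y : X, dist (g x) (g y) ≤ C * lam * dist x y

open Metric NormedSpace Set
open scoped NNReal ENNReal

section Vectors

variable {V : Type*} [NormedAddCommGroup V] [NormedSpace ℝ V]

lemma norm_normalize_le (x : V) : ‖normalize x‖ ≤ 1 := by
  rcases eq_or_ne x 0 with rfl | hx
  · simp [normalize_zero_eq_zero]
  · exact (norm_normalize_eq_one_iff.2 hx).le

lemma norm_mul_norm_normalize_sub_normalize_le (x y : V) :
    ‖x‖ * ‖normalize x - normalize y‖ ≤ 2 * ‖x - y‖ := by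
  have key : ‖x‖ • (normalize x - normalize y) = (x - y) + (‖y‖ - ‖x‖) • normalize y := by
    rw [smul_sub, norm_smul_normalize, sub_smul, norm_smul_normalize]; abel
  calc ‖x‖ * ‖normalize x - normalize y‖ = ‖(x - y) + (‖y‖ - ‖x‖) • normalize y‖ := by
        rw [← key, norm_smul, norm_norm]
    _ ≤ ‖x - y‖ + |‖y‖ - ‖x‖| * ‖normalize y‖ := by
        rw [← Real.norm_eq_abs, ← norm_smul]; exact norm_add_le _ _
    _ ≤ ‖x - y‖ + ‖x - y‖ * 1 := by
        gcongr
        · exact (abs_norm_sub_norm_le y x).trans_eq (norm_sub_rev y x)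
        · exact norm_normalize_le y
    _ = 2 * ‖x - y‖ := by ring

lemma LipschitzOnWith.normalize {α : Type*} [PseudoMetricSpace α] {H : α → V} {s : Set α}
    {K r : ℝ≥0} (hH : LipschitzOnWith K H s) (hr : 0 < r) (hHr : ∀ x ∈ s, r ≤ ‖H x‖) :
    LipschitzOnWith (2 * K / r) (fun x => NormedSpace.normalize (H x)) s := by
  refine LipschitzOnWith.of_dist_le_mul fun x hx y hy => ?_
  have hxy := norm_mul_norm_normalize_sub_normalize_le (H x) (H y)
  have hd := hH.dist_le_mul x hx y hy
  rw [dist_eq_norm] at hd ⊢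
  rw [NNReal.coe_div, NNReal.coe_mul, NNReal.coe_two, div_mul_eq_mul_div,
    le_div_iff₀ (by exact_mod_cast hr)]
  have := hHr x hx
  nlinarith [norm_nonneg (NormedSpace.normalize (H x) - NormedSpace.normalize (H y))]

lemma LipschitzWith.smul_of_norm_le_s11 {α : Type*} [PseudoMetricSpace α] {θ : α → ℝ} {D : α → V}
    {Kθ KD B : ℝ≥0} (hθ : LipschitzWith Kθ θ) (hθ_le : ∀ x, |θ x| ≤ 1) (hD : LipschitzWith KD D)
    (hDB : ∀ x, θ x ≠ 0 → ‖D x‖ ≤ B) : LipschitzWith (Kθ * B + KD) fun x => θ x • D x := by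
  have key : ∀ x y, θ x ≠ 0 → ‖θ x • D x - θ y • D y‖ ≤ (Kθ * B + KD) * dist x y := by
    intro x y hx
    calc ‖θ x • D x - θ y • D y‖ = ‖(θ x - θ y) • D x + θ y • (D x - D y)‖ := by
          rw [sub_smul, smul_sub, sub_add_sub_cancel]
      _ ≤ |θ x - θ y| * ‖D x‖ + |θ y| * ‖D x - D y‖ := by
          simpa only [norm_smul, Real.norm_eq_abs] using
            norm_add_le ((θ x - θ y) • D x) (θ y • (D x - D y))
      _ ≤ (Kθ * dist x y) * B + 1 * (KD * dist x y) := by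
          have hθxy : |θ x - θ y| ≤ Kθ * dist x y := by
            simpa only [Real.dist_eq] using hθ.dist_le_mul x y
          have hDxy : ‖D x - D y‖ ≤ KD * dist x y := by
            simpa only [dist_eq_norm] using hD.dist_le_mul x y
          gcongr
          exacts [hDB x hx, hθ_le y]
      _ = (Kθ * B + KD) * dist x y := by ring
  refine LipschitzWith.of_dist_le_mul fun x y => ?_
  rw [dist_eq_norm]
  by_cases hx : θ x ≠ 0
  · exact key x y hx
  by_cases hy : θ y ≠ 0
  · rw [norm_sub_rev, dist_comm]; exact key y x hy
  · push Not at hx hy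
    simp only [hx, hy, zero_smul, sub_zero, norm_zero]
    positivity

lemma one_div_four_le_norm_add_smul_sub {f g : V} {t : ℝ} (ht : t ∈ Icc (0 : ℝ) 1)
    (hg : 1 / 4 ≤ ‖g‖) (hf : t ≠ 0 → 3 / 4 ≤ ‖f‖ ∧ ‖f - g‖ ≤ 1 / 2) :
    1 / 4 ≤ ‖g + t • (f - g)‖ := by
  rcases eq_or_ne t 0 with rfl | ht0
  · simpa using hg
  obtain ⟨hf, hfg⟩ := hf ht0
  have hrest : ‖(1 - t) • (f - g)‖ ≤ 1 / 2 := by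
    rw [norm_smul, Real.norm_of_nonneg (by linarith [ht.2])]
    nlinarith [ht.1, norm_nonneg (f - g)]
  have h := norm_sub_norm_le f ((1 - t) • (f - g))
  rw [show f - (1 - t) • (f - g) = g + t • (f - g) by rw [sub_smul, one_smul]; abel] at h
  linarith

end Vectors

section WithLpProd

variable {p : ℝ≥0∞} [Fact (1 ≤ p)]

lemma WithLp.lipschitzWith_fst {α β : Type*} [PseudoMetricSpace α] [PseudoMetricSpace β] :
    LipschitzWith 1 (WithLp.fst : WithLp p (α × β) → α) :=
  LipschitzWith.of_dist_le_mul fun x y => by simpa using WithLp.dist_fst_le x y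

lemma WithLp.lipschitzWith_snd {α β : Type*} [PseudoMetricSpace α] [PseudoMetricSpace β] :
    LipschitzWith 1 (WithLp.snd : WithLp p (α × β) → β) :=
  LipschitzWith.of_dist_le_mul fun x y => by simpa using WithLp.dist_snd_le x y

lemma WithLp.prod_norm_toLp_le_add {E F : Type*} [SeminormedAddCommGroup E]
    [SeminormedAddCommGroup F] (a : E) (b : F) : ‖WithLp.toLp p (a, b)‖ ≤ ‖a‖ + ‖b‖ := by
  have h : WithLp.toLp p (a, b) = WithLp.toLp p (a, 0) + WithLp.toLp p (0, b) := by
    rw [← WithLp.toLp_add, Prod.mk_add_mk, add_zero, zero_add]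
  rw [h, ← WithLp.norm_toLp_fst p E F a, ← WithLp.norm_toLp_snd p E F b]
  exact norm_add_le _ _

end WithLpProd

def HasLipschitzExtension (X E : Type*) [PseudoMetricSpace X] [PseudoMetricSpace E] (K : ℝ≥0) :
    Prop :=
  ∀ (s : Set X) (f : X → E) (Λ : ℝ≥0), LipschitzOnWith Λ f s →
    ∃ g : X → E, LipschitzWith (K * Λ) g ∧ EqOn f g s

section Extension

variable {X : Type*} [PseudoMetricSpace X]

lemma hasLipschitzExtension_real : HasLipschitzExtension X ℝ 1 := fun _ _ _ hf => by
  simpa only [one_mul] using hf.extend_real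

lemma hasLipschitzExtension_euclideanSpace (ι : Type*) [Fintype ι] :
    HasLipschitzExtension X (EuclideanSpace ℝ ι) (NNReal.sqrt (Fintype.card ι)) := by
  intro s f Λ hf
  have hf' : LipschitzOnWith Λ (fun x => WithLp.ofLp (f x)) s := by
    simpa only [one_mul, Function.comp_def] using
      (PiLp.lipschitzWith_ofLp 2 _).comp_lipschitzOnWith hf
  obtain ⟨g, hg, hfg⟩ := hf'.extend_pi
  refine ⟨fun x => WithLp.toLp 2 (g x), ?_, fun x hx => by simp [← hfg hx]⟩
  have hc : (Fintype.card ι : ℝ≥0) ^ (1 / (2 : ℝ≥0∞)).toReal = NNReal.sqrt (Fintype.card ι) := by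
    rw [NNReal.sqrt_eq_rpow]; norm_num
  exact hc ▸ (PiLp.lipschitzWith_toLp 2 (fun _ : ι => ℝ)).comp hg

lemma HasLipschitzExtension.withLpProd {p : ℝ≥0∞} [Fact (1 ≤ p)] {E F : Type*}
    [SeminormedAddCommGroup E] [SeminormedAddCommGroup F] {KE KF : ℝ≥0}
    (hE : HasLipschitzExtension X E KE) (hF : HasLipschitzExtension X F KF) :
    HasLipschitzExtension X (WithLp p (E × F)) (KE + KF) := by
  intro s f Λ hf
  obtain ⟨g₁, hg₁, hfg₁⟩ := hE s (fun x => (f x).fst) Λ (by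
    simpa only [one_mul, Function.comp_def] using WithLp.lipschitzWith_fst.comp_lipschitzOnWith hf)
  obtain ⟨g₂, hg₂, hfg₂⟩ := hF s (fun x => (f x).snd) Λ (by
    simpa only [one_mul, Function.comp_def] using WithLp.lipschitzWith_snd.comp_lipschitzOnWith hf)
  refine ⟨fun x => WithLp.toLp p (g₁ x, g₂ x), LipschitzWith.of_dist_le_mul fun x y => ?_,
    fun x hx => ?_⟩
  · rw [dist_eq_norm, ← WithLp.toLp_sub, Prod.mk_sub_mk, NNReal.coe_mul, NNReal.coe_add, add_mul,
      add_mul]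
    refine (WithLp.prod_norm_toLp_le_add _ _).trans (add_le_add ?_ ?_)
    · simpa only [dist_eq_norm, NNReal.coe_mul] using hg₁.dist_le_mul x y
    · simpa only [dist_eq_norm, NNReal.coe_mul] using hg₂.dist_le_mul x y
  · change f x = WithLp.toLp p (g₁ x, g₂ x)
    rw [← hfg₁ hx, ← hfg₂ hx]
    rfl

end Extension

def LargeScaleLipschitzExtensorWith (X E : Type*) [MetricSpace X] [MetricSpace E] (C M : ℝ≥0) :
    Prop :=
  ∀ A : Set X, A.Nonempty → ∀ Λ : ℝ≥0, 0 < Λ → Λ < M → ∀ f : A → E, LipschitzWith Λ f →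
    ∃ g : X → E, (∀ a : A, g a = f a) ∧ LipschitzWith (C * Λ) g

section LargeScale

variable {X E : Type*} [MetricSpace X] [MetricSpace E]

lemma largeScaleLipschitzExtensorOf_iff :
    LargeScaleLipschitzExtensorOf X E ↔
      ∃ C M : ℝ≥0, 0 < M ∧ LargeScaleLipschitzExtensorWith X E C M := by
  constructor
  · rintro ⟨C, hC, M, hM, h⟩
    refine ⟨C.toNNReal, M.toNNReal, by simpa using hM, fun A hA Λ hΛ hΛM f hf => ?_⟩
    obtain ⟨g, hgA, hg⟩ := h A hA Λ hΛ (Real.lt_toNNReal_iff_coe_lt.1 hΛM) f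
      fun a b => hf.dist_le_mul a b
    exact ⟨g, hgA, LipschitzWith.of_dist_le_mul fun x y => by simpa [hC.le] using hg x y⟩
  · rintro ⟨C, M, hM, h⟩
    refine ⟨C + 1, by positivity, M, hM, fun A hA lam hlam hlamM f hf => ?_⟩
    obtain ⟨g, hgA, hg⟩ := h A hA lam.toNNReal (by simpa using hlam)
      ((Real.toNNReal_lt_iff_lt_coe hlam.le).2 hlamM) f
      (LipschitzWith.of_dist_le_mul fun a b => by rw [Real.coe_toNNReal _ hlam.le]; exact hf a b)
    refine ⟨g, hgA, fun x y => (hg.dist_le_mul x y).trans ?_⟩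
    rw [NNReal.coe_mul, Real.coe_toNNReal _ hlam.le]
    gcongr
    linarith

lemma LargeScaleLipschitzExtensorOf.congr_right {E' : Type*} [MetricSpace E'] (e : E ≃ᵢ E')
    (h : LargeScaleLipschitzExtensorOf X E) : LargeScaleLipschitzExtensorOf X E' := by
  obtain ⟨C, hC, M, hM, h⟩ := h
  refine ⟨C, hC, M, hM, fun A hA lam hlam hlamM f hf => ?_⟩
  obtain ⟨g, hgA, hg⟩ := h A hA lam hlam hlamM (fun a => e.symm (f a))
    fun a b => by simpa only [e.symm.dist_eq] using hf a b
  exact ⟨fun x => e (g x), fun a => by simp [hgA],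
    fun x y => by simpa only [e.dist_eq] using hg x y⟩

end LargeScale

section Cutoff

variable {X : Type*} [MetricSpace X]

noncomputable def nearCutoff (A : Set X) (c : ℝ) (x : X) : ℝ := max 0 (1 - c * infDist x A)

lemma lipschitzWith_nearCutoff (A : Set X) (c : ℝ≥0) : LipschitzWith c (nearCutoff A c) := by
  refine LipschitzWith.of_dist_le_mul fun x y => ?_
  rw [Real.dist_eq, nearCutoff, nearCutoff]
  refine (abs_max_sub_max_le_max _ _ _ _).trans (max_le (by simp; positivity) ?_)
  rw [sub_sub_sub_cancel_left, ← mul_sub, abs_mul, NNReal.abs_eq, abs_sub_comm]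
  gcongr
  simpa [Real.dist_eq] using (lipschitz_infDist_pt A).dist_le_mul x y

lemma nearCutoff_mem_Icc (A : Set X) {c : ℝ} (hc : 0 ≤ c) (x : X) :
    nearCutoff A c x ∈ Icc 0 1 :=
  ⟨le_max_left _ _, max_le zero_le_one (by nlinarith [infDist_nonneg (x := x) (s := A)])⟩

lemma nearCutoff_of_mem {A : Set X} (c : ℝ) {a : X} (ha : a ∈ A) : nearCutoff A c a = 1 := by
  simp [nearCutoff, infDist_zero_of_mem ha]

lemma exists_mul_dist_lt_one_of_nearCutoff_ne_zero {A : Set X} (hA : A.Nonempty) {c : ℝ}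
    (hc : 0 < c) {x : X} (hx : nearCutoff A c x ≠ 0) : ∃ a ∈ A, c * dist x a < 1 := by
  have h : infDist x A < 1 / c := by
    rw [lt_div_iff₀ hc, mul_comm]
    by_contra! h
    exact hx (max_eq_left (by linarith))
  obtain ⟨a, ha, hxa⟩ := (infDist_lt_iff hA).1 h
  exact ⟨a, ha, by rwa [lt_div_iff₀ hc, mul_comm] at hxa⟩

end Cutoff

namespace SphereSuspension

variable {E : Type*} [NormedAddCommGroup E]

noncomputable def height (w : WithLp 2 (E × ℝ)) : ℝ := max (-1) (min 1 w.snd)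

-- The term `1 / 2 - |height w|` keeps `point w u` away from `0`; on the unit sphere the radius is
-- `‖w.fst‖` (see `point_of_norm_eq_one`).
noncomputable def radius (w : WithLp 2 (E × ℝ)) : ℝ := max (1 / 2 - |height w|) (min ‖w.fst‖ 1)

lemma lipschitzWith_height : LipschitzWith 1 (height (E := E)) :=
  (WithLp.lipschitzWith_snd.const_min 1).const_max (-1)

lemma lipschitzWith_radius : LipschitzWith 1 (radius (E := E)) := by
  refine LipschitzWith.of_dist_le_mul fun w w' => ?_
  rw [NNReal.coe_one, one_mul, Real.dist_eq, radius, radius]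
  refine (abs_max_sub_max_le_max _ _ _ _).trans (max_le ?_ ?_)
  · rw [sub_sub_sub_cancel_left, abs_sub_comm]
    refine (abs_abs_sub_abs_le_abs_sub _ _).trans ?_
    simpa [Real.dist_eq] using lipschitzWith_height.dist_le_mul w w'
  · refine (abs_min_sub_min_le_max _ _ _ _).trans (max_le ?_ (by simp))
    refine (abs_norm_sub_norm_le _ _).trans ?_
    simpa [dist_eq_norm] using WithLp.dist_fst_le w w'

lemma abs_radius_le_one (w : WithLp 2 (E × ℝ)) : |radius w| ≤ 1 := by
  have h0 : 0 ≤ radius w := le_max_of_le_right (le_min (norm_nonneg _) zero_le_one)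
  rw [abs_of_nonneg h0]
  exact max_le (by linarith [abs_nonneg (height w)]) (min_le_right _ _)

variable [NormedSpace ℝ E]

noncomputable def point (w : WithLp 2 (E × ℝ)) (u : E) : WithLp 2 (E × ℝ) :=
  WithLp.toLp 2 (radius w • u, height w)

lemma one_div_four_le_norm_point (w : WithLp 2 (E × ℝ)) {u : E} (hu : ‖u‖ = 1) :
    1 / 4 ≤ ‖point w u‖ := by
  have hsq : ‖point w u‖ ^ 2 = radius w ^ 2 + height w ^ 2 := by
    rw [point, WithLp.prod_norm_sq_eq_of_L2]
    simp [norm_smul, hu]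
  have hsum : 1 / 2 - |height w| ≤ radius w := le_max_left _ _
  nlinarith [norm_nonneg (point w u), sq_abs (height w), sq_nonneg (radius w - |height w|)]

lemma lipschitzWith_point {α : Type*} [PseudoMetricSpace α] {F : α → WithLp 2 (E × ℝ)}
    {v : α → E} {KF Kv : ℝ≥0} (hF : LipschitzWith KF F) (hv : LipschitzWith Kv v)
    (hv1 : ∀ x, ‖v x‖ ≤ 1) : LipschitzWith (2 * KF + Kv) fun x => point (F x) (v x) := by
  have hr : LipschitzWith (KF * 1 + Kv) fun x => radius (F x) • v x :=
    LipschitzWith.smul_of_norm_le_s11 (by simpa [Function.comp_def] using lipschitzWith_radius.comp hF)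
      (fun x => abs_radius_le_one _) hv (fun x _ => by simpa using hv1 x)
  have hh : LipschitzWith KF fun x => height (F x) := by
    simpa [Function.comp_def] using lipschitzWith_height.comp hF
  refine LipschitzWith.of_dist_le_mul fun x y => ?_
  rw [dist_eq_norm, point, point, ← WithLp.toLp_sub, Prod.mk_sub_mk]
  refine (WithLp.prod_norm_toLp_le_add _ _).trans ?_
  have h1 := hr.dist_le_mul x y
  have h2 := hh.dist_le_mul x y
  rw [dist_eq_norm] at h1 h2
  push_cast at h1 h2 ⊢
  linarith

lemma point_of_norm_eq_one {p : WithLp 2 (E × ℝ)} (hp : ‖p‖ = 1) (u : E) :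
    point p u = WithLp.toLp 2 (‖p.fst‖ • u, p.snd) := by
  have hsq := WithLp.prod_norm_sq_eq_of_L2 p
  rw [hp, Real.norm_eq_abs, sq_abs] at hsq
  have hfst : ‖p.fst‖ ≤ 1 := by nlinarith [norm_nonneg p.fst]
  have hsnd : |p.snd| ≤ 1 := by nlinarith [abs_nonneg p.snd, sq_abs p.snd]
  have hheight : height p = p.snd := by
    rw [height, min_eq_right (abs_le.1 hsnd).2, max_eq_right (abs_le.1 hsnd).1]
  have hradius : radius p = ‖p.fst‖ := by
    rw [radius, hheight, min_eq_left hfst, max_eq_right]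
    nlinarith [norm_nonneg p.fst, abs_nonneg p.snd, sq_abs p.snd]
  rw [point, hheight, hradius]

lemma norm_point_sub_le {p : WithLp 2 (E × ℝ)} (hp : ‖p‖ = 1) {u : E} (hu : ‖u‖ ≤ 1)
    (w : WithLp 2 (E × ℝ)) : ‖point w u - w‖ ≤ 3 * ‖w - p‖ + ‖‖p.fst‖ • u - p.fst‖ := by
  have hlip : ‖point w u - point p u‖ ≤ 2 * ‖w - p‖ := by
    simpa [dist_eq_norm] using
      (lipschitzWith_point LipschitzWith.id (LipschitzWith.const u) fun _ => hu).dist_le_mul w p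
  have hp' : point p u - p = WithLp.toLp 2 (‖p.fst‖ • u - p.fst, 0) := by
    rw [point_of_norm_eq_one hp]
    exact (WithLp.ext_iff 2).2 (Prod.ext (by simp) (by simp))
  calc ‖point w u - w‖ = ‖(point w u - point p u) + (point p u - p) + (p - w)‖ := by abel_nf
    _ ≤ ‖point w u - point p u‖ + ‖point p u - p‖ + ‖p - w‖ := norm_add₃_le
    _ ≤ 2 * ‖w - p‖ + ‖‖p.fst‖ • u - p.fst‖ + ‖w - p‖ := by
        rw [hp', WithLp.norm_toLp_fst, norm_sub_rev p w]; gcongr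
    _ = 3 * ‖w - p‖ + ‖‖p.fst‖ • u - p.fst‖ := by ring

lemma norm_sub_point_le_half {p w : WithLp 2 (E × ℝ)} {u : E} (hp : ‖p‖ = 1) (hu : ‖u‖ = 1)
    (hwp : ‖w - p‖ ≤ 1 / 100) (hdir : 1 / 8 ≤ ‖p.fst‖ → ‖u - normalize p.fst‖ ≤ 1 / 100) :
    ‖w - point w u‖ ≤ 1 / 2 := by
  have hfst : ‖p.fst‖ ≤ 1 := hp ▸ WithLp.norm_fst_le (x := p)
  have hhoriz : ‖‖p.fst‖ • u - p.fst‖ ≤ 1 / 4 := by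
    by_cases h8 : 1 / 8 ≤ ‖p.fst‖
    · have h : ‖p.fst‖ • u - p.fst = ‖p.fst‖ • (u - normalize p.fst) := by
        rw [smul_sub, norm_smul_normalize]
      calc ‖‖p.fst‖ • u - p.fst‖ = ‖p.fst‖ * ‖u - normalize p.fst‖ := by
            rw [h, norm_smul, norm_norm]
        _ ≤ 1 * (1 / 100) := by gcongr; exact hdir h8
        _ ≤ 1 / 4 := by norm_num
    · calc ‖‖p.fst‖ • u - p.fst‖ ≤ ‖‖p.fst‖ • u‖ + ‖p.fst‖ := norm_sub_le _ _
        _ = 2 * ‖p.fst‖ := by rw [norm_smul, norm_norm, hu]; ring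
        _ ≤ 1 / 4 := by linarith
  rw [norm_sub_rev]
  linarith [norm_point_sub_le hp hu.le w]

-- `G := point F v` is bounded away from `0` everywhere; the cutoff `θ` switches to `F` near `A`,
-- where `F` is within `1/2` of `G`.
lemma exists_unit_lipschitzWith_eqOn {X : Type*} [MetricSpace X] {A : Set X} (hA : A.Nonempty)
    {F : X → WithLp 2 (E × ℝ)} {v : X → E} {KF Kv c : ℝ≥0} (hc : 0 < c) (hKF : 100 * KF ≤ c)
    (hKv : 100 * Kv ≤ c) (hF : LipschitzWith KF F) (hv : LipschitzWith Kv v)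
    (hv1 : ∀ x, ‖v x‖ = 1) (hFA : ∀ a ∈ A, ‖F a‖ = 1)
    (hvA : ∀ a ∈ A, 1 / 8 ≤ ‖(F a).fst‖ → v a = normalize (F a).fst) :
    ∃ g : X → WithLp 2 (E × ℝ), (∀ x, ‖g x‖ = 1) ∧ EqOn g F A ∧ LipschitzWith (5 * c) g := by
  set θ := nearCutoff A c
  have hθ01 := nearCutoff_mem_Icc A c.coe_nonneg
  set G := fun x => point (F x) (v x)
  have hG : LipschitzWith (2 * KF + Kv) G := lipschitzWith_point hF hv fun x => (hv1 x).le
  have hnear : ∀ x, θ x ≠ 0 → 3 / 4 ≤ ‖F x‖ ∧ ‖F x - G x‖ ≤ 1 / 2 := by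
    intro x hx
    obtain ⟨a, ha, hxa⟩ :=
      exists_mul_dist_lt_one_of_nearCutoff_ne_zero hA (NNReal.coe_pos.2 hc) hx
    have hsmall : ∀ K : ℝ≥0, 100 * K ≤ c → K * dist x a ≤ 1 / 100 := fun K hK => by
      have hK' : (100 : ℝ) * K ≤ c := by exact_mod_cast hK
      nlinarith [mul_le_mul_of_nonneg_right hK' (dist_nonneg (x := x) (y := a))]
    have hFxa : ‖F x - F a‖ ≤ 1 / 100 := by
      simpa only [dist_eq_norm] using (hF.dist_le_mul x a).trans (hsmall KF hKF)
    have hvxa : ‖v x - v a‖ ≤ 1 / 100 := by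
      simpa only [dist_eq_norm] using (hv.dist_le_mul x a).trans (hsmall Kv hKv)
    refine ⟨by linarith [norm_sub_norm_le (F a) (F x), norm_sub_rev (F x) (F a), hFA a ha], ?_⟩
    exact norm_sub_point_le_half (hFA a ha) (hv1 x) hFxa fun h8 => hvA a ha h8 ▸ hvxa
  set H := fun x => G x + θ x • (F x - G x)
  have hH : LipschitzWith ((2 * KF + Kv) + (c * (1 / 2) + (KF + (2 * KF + Kv)))) H :=
    hG.add <| (lipschitzWith_nearCutoff A c).smul_of_norm_le_s11
      (fun x => abs_le.2 ⟨by linarith [(hθ01 x).1], (hθ01 x).2⟩) (hF.sub hG)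
      (fun x hx => by simpa using (hnear x hx).2)
  have hH4 : ∀ x, 1 / 4 ≤ ‖H x‖ := fun x =>
    one_div_four_le_norm_add_smul_sub (hθ01 x) (one_div_four_le_norm_point _ (hv1 x)) (hnear x)
  refine ⟨fun x => normalize (H x), fun x => norm_normalize_eq_one_iff.2 ?_, fun a ha => ?_, ?_⟩
  · exact norm_ne_zero_iff.1 (by linarith [hH4 x])
  · simp [H, θ, nearCutoff_of_mem c ha, normalize_eq_self_of_norm_eq_one (hFA a ha)]
  · have hn := (hH.lipschitzOnWith (s := univ)).normalize (r := 1 / 4) (by norm_num)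
      fun x _ => hH4 x
    refine (lipschitzOnWith_univ.1 hn).weaken ?_
    rw [← NNReal.coe_le_coe]
    push_cast
    linarith

end SphereSuspension

lemma LargeScaleLipschitzExtensorWith.exists_unit_extension_normalize {X E : Type*}
    [MetricSpace X] [NormedAddCommGroup E] [NormedSpace ℝ E] [Nontrivial E] {C M Λ : ℝ≥0}
    (h : LargeScaleLipschitzExtensorWith X (sphere (0 : E) 1) C M) (hΛ : 0 < Λ)
    (hΛM : 16 * Λ < M) {A : Set X} {φ : X → E} (hφ : LipschitzOnWith Λ φ A) :
    ∃ v : X → E, (∀ x, ‖v x‖ = 1) ∧ LipschitzWith (C * (16 * Λ)) v ∧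
      ∀ a ∈ A, 1 / 8 ≤ ‖φ a‖ → v a = normalize (φ a) := by
  set A' := {a ∈ A | 1 / 8 ≤ ‖φ a‖}
  rcases A'.eq_empty_or_nonempty with hA' | hA'
  · obtain ⟨u, hu⟩ := exists_norm_eq E zero_le_one
    exact ⟨fun _ => u, fun _ => hu, (LipschitzWith.const u).weaken bot_le,
      fun a ha h8 => absurd (show a ∈ A' from ⟨ha, h8⟩) (hA' ▸ notMem_empty a)⟩
  have hφ0 : ∀ a ∈ A', φ a ≠ 0 := fun a ha => norm_pos_iff.1 (by linarith [ha.2])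
  have hlip : LipschitzOnWith (2 * Λ / (1 / 8)) (fun x => normalize (φ x)) A' :=
    (hφ.mono (sep_subset _ _)).normalize (by norm_num) fun x hx => hx.2
  rw [show 2 * Λ / (1 / 8) = 16 * Λ by ring] at hlip
  have hunit : ∀ a : A', normalize (φ a) ∈ sphere (0 : E) 1 := fun a => by
    simpa using norm_normalize_eq_one_iff.2 (hφ0 a a.2)
  obtain ⟨g, hgA, hg⟩ := h A' hA' (16 * Λ) (by positivity) hΛM
    (fun a => ⟨normalize (φ a), hunit a⟩) ((lipschitzOnWith_iff_restrict.1 hlip).subtype_mk hunit)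
  exact ⟨fun x => g x, fun x => by simp, hg,
    fun a ha h8 => congrArg Subtype.val (hgA ⟨a, ha, h8⟩)⟩

theorem LargeScaleLipschitzExtensorOf.sphere_withLp_prod_real {X E : Type*} [MetricSpace X]
    [NormedAddCommGroup E] [NormedSpace ℝ E] [Nontrivial E] {K : ℝ≥0}
    (hE : HasLipschitzExtension X E K) (h : LargeScaleLipschitzExtensorOf X (sphere (0 : E) 1)) :
    LargeScaleLipschitzExtensorOf X (sphere (0 : WithLp 2 (E × ℝ)) 1) := by
  obtain ⟨C, M, hM, hCM⟩ := largeScaleLipschitzExtensorOf_iff.1 h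
  refine largeScaleLipschitzExtensorOf_iff.2
    ⟨5 * (100 * (K + 1 + 16 * C)), M / 16, by positivity, fun A hA Λ hΛ hΛM f hf => ?_⟩
  have hfA : ∀ φ : X → WithLp 2 (E × ℝ), (∀ a : A, φ a = f a) → LipschitzOnWith Λ φ A :=
    fun φ hφ => lipschitzOnWith_iff_restrict.2 <| by
      simpa [Set.domRestrict_def, hφ, Function.comp_def] using (LipschitzWith.subtype_val _).comp hf
  obtain ⟨F, hF, hfF⟩ := hE.withLpProd hasLipschitzExtension_real A
    (Function.extend (↑) (fun a => (f a : WithLp 2 (E × ℝ))) 0) Λ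
    (hfA _ fun a => Subtype.val_injective.extend_apply _ _ a)
  have hFA : ∀ a : A, F a = f a := fun a =>
    (hfF a.2).symm.trans (Subtype.val_injective.extend_apply _ _ a)
  obtain ⟨v, hv1, hv, hvA⟩ := hCM.exists_unit_extension_normalize hΛ
    (by rw [lt_div_iff₀ (by norm_num)] at hΛM; linarith)
    (by simpa [Function.comp_def] using WithLp.lipschitzWith_fst.comp_lipschitzOnWith (hfA F hFA))
  obtain ⟨g, hg1, hgF, hg⟩ := SphereSuspension.exists_unit_lipschitzWith_eqOn hA
    (c := 100 * (K + 1 + 16 * C) * Λ) (by positivity)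
    (by rw [← mul_assoc]; gcongr 100 * ?_ * Λ; exact le_self_add)
    (by rw [show 100 * (C * (16 * Λ)) = 100 * (16 * C) * Λ by ring]
        gcongr 100 * ?_ * Λ; exact le_add_self) hF hv hv1 (fun a ha => by simp [hFA ⟨a, ha⟩]) hvA
  exact ⟨fun x => ⟨g x, by simpa using hg1 x⟩, fun a => Subtype.ext ((hgF a.2).trans (hFA a)),
    by simpa [mul_assoc] using hg.subtype_mk _⟩

def LinearIsometryEquiv.unitSphereIsometryEquiv {V V' : Type*} [NormedAddCommGroup V]
    [NormedAddCommGroup V'] [NormedSpace ℝ V] [NormedSpace ℝ V'] (L : V ≃ₗᵢ[ℝ] V') :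
    sphere (0 : V) 1 ≃ᵢ sphere (0 : V') 1 where
  toEquiv := L.toEquiv.subtypeEquiv fun x => by simp
  isometry_toFun := fun x y => L.isometry x y

noncomputable def euclideanSpaceSuccIsometry (n : ℕ) :
    EuclideanSpace ℝ (Fin (n + 1)) ≃ₗᵢ[ℝ] WithLp 2 (EuclideanSpace ℝ (Fin n) × ℝ) :=
  (LinearIsometryEquiv.piLpCongrLeft 2 ℝ ℝ finSumFinEquiv.symm).trans
    ((PiLp.sumPiLpEquivProdLpPiLp 2 _).trans
      (LinearIsometryEquiv.withLpProdCongr 2 (LinearIsometryEquiv.refl ℝ _)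
        (OrthonormalBasis.singleton (Fin 1) ℝ).repr.symm))

theorem sphere_succ_large_scale_extensor_of_sphere
    {X : Type*} [MetricSpace X] (n : ℕ)
    (h : LargeScaleLipschitzExtensorOf X
      (Metric.sphere (0 : EuclideanSpace ℝ (Fin (n + 1))) 1)) :
    LargeScaleLipschitzExtensorOf X
      (Metric.sphere (0 : EuclideanSpace ℝ (Fin (n + 2))) 1) :=
  (h.sphere_withLp_prod_real (hasLipschitzExtension_euclideanSpace _)).congr_right
    (euclideanSpaceSuccIsometry (n + 1)).unitSphereIsometryEquiv.symm
end

section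
/- Let X be a metric space and n ≥ 0 an integer. If S^n is a small scale Lipschitz extensor of X, then S^{n+1} is also a small scale Lipschitz extensor of X. -/
open Metric Real
open scoped RealInnerProductSpace

-- `(clampedRadius θ t, clampedHeight θ t)` is the point of the unit circle at height `t`, except
-- that the height is clamped to `±√(1 - θ²)`, so that the radius never drops below `θ`.
noncomputable def clampedHeight (θ t : ℝ) : ℝ := max (-√(1 - θ ^ 2)) (min √(1 - θ ^ 2) t)

noncomputable def clampedRadius (θ t : ℝ) : ℝ := √(1 - clampedHeight θ t ^ 2)

section Profile

variable {θ t s : ℝ}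

theorem abs_clampedHeight_le (θ t : ℝ) : |clampedHeight θ t| ≤ √(1 - θ ^ 2) :=
  abs_le.2 ⟨le_max_left _ _, max_le (by linarith [sqrt_nonneg (1 - θ ^ 2)]) (min_le_left _ _)⟩

theorem clampedHeight_sq_le_one (θ t : ℝ) : clampedHeight θ t ^ 2 ≤ 1 := by
  have h := abs_le.1 (abs_clampedHeight_le θ t)
  have h1 : √(1 - θ ^ 2) ≤ 1 := sqrt_le_one.mpr (by nlinarith)
  nlinarith [sqrt_nonneg (1 - θ ^ 2)]

theorem abs_clampedHeight_sub_le (θ t s : ℝ) :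
    |clampedHeight θ t - clampedHeight θ s| ≤ |t - s| := by
  simpa [Real.dist_eq, clampedHeight] using ((LipschitzWith.id.const_min √(1 - θ ^ 2)).const_max
    (-√(1 - θ ^ 2))).dist_le_mul t s

theorem clampedHeight_of_abs_le (h : |t| ≤ √(1 - θ ^ 2)) : clampedHeight θ t = t := by
  rw [clampedHeight, min_eq_right (abs_le.1 h).2, max_eq_right (abs_le.1 h).1]

theorem abs_clampedHeight_sub_self_le (hθ : 0 ≤ θ) (hθ1 : θ ≤ 1) (ht : |t| ≤ 1) :
    |clampedHeight θ t - t| ≤ θ ^ 2 := by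
  set m := √(1 - θ ^ 2) with hm
  have hm0 : 0 ≤ m := sqrt_nonneg _
  have hm2 : m ^ 2 = 1 - θ ^ 2 := sq_sqrt (by nlinarith)
  have hgap : 1 - m ≤ θ ^ 2 := by nlinarith
  obtain ⟨ht1, ht2⟩ := abs_le.1 ht
  rcases le_total t (-m) with h | h
  · rw [clampedHeight, ← hm, min_eq_right (by linarith), max_eq_left h, abs_le]
    constructor <;> linarith
  rcases le_total t m with h' | h'
  · rw [clampedHeight_of_abs_le (abs_le.2 ⟨h, h'⟩), sub_self, abs_zero]
    positivity
  · rw [clampedHeight, ← hm, min_eq_left h', max_eq_right (by linarith), abs_le]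
    constructor <;> linarith

theorem clampedRadius_sq_add_clampedHeight_sq (θ t : ℝ) :
    clampedRadius θ t ^ 2 + clampedHeight θ t ^ 2 = 1 := by
  rw [clampedRadius, sq_sqrt (by linarith [clampedHeight_sq_le_one θ t])]
  ring

theorem le_clampedRadius (hθ : 0 ≤ θ) (hθ1 : θ ≤ 1) : θ ≤ clampedRadius θ t := by
  have h := abs_le.1 (abs_clampedHeight_le θ t)
  have hsq : clampedHeight θ t ^ 2 ≤ 1 - θ ^ 2 := by
    rw [← sq_sqrt (show 0 ≤ 1 - θ ^ 2 by nlinarith)]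
    exact sq_le_sq' h.1 h.2
  calc θ = √(θ ^ 2) := (sqrt_sq hθ).symm
    _ ≤ clampedRadius θ t := sqrt_le_sqrt (by linarith)

theorem clampedRadius_le_one (θ t : ℝ) : clampedRadius θ t ≤ 1 :=
  sqrt_le_one.mpr (by nlinarith)

theorem clampedRadius_of_abs_le (h : |t| ≤ √(1 - θ ^ 2)) :
    clampedRadius θ t = √(1 - t ^ 2) := by
  rw [clampedRadius, clampedHeight_of_abs_le h]

theorem clampedRadius_of_le_abs (hθ : 0 ≤ θ) (hθ1 : θ ≤ 1) (h : √(1 - θ ^ 2) ≤ |t|) :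
    clampedRadius θ t = θ := by
  set m := √(1 - θ ^ 2) with hm
  have hm0 : 0 ≤ m := sqrt_nonneg _
  have hsq : clampedHeight θ t ^ 2 = m ^ 2 := by
    rcases abs_cases t with ⟨ht, -⟩ | ⟨ht, -⟩ <;> rw [ht] at h
    · rw [clampedHeight, ← hm, min_eq_left h, max_eq_right (by linarith)]
    · rw [clampedHeight, ← hm, min_eq_right (by linarith), max_eq_left (by linarith), neg_sq]
  rw [clampedRadius, hsq, hm, sq_sqrt (by nlinarith), sub_sub_cancel, sqrt_sq hθ]

theorem abs_clampedRadius_sub_le (hθ : 0 < θ) (hθ1 : θ ≤ 1) :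
    |clampedRadius θ t - clampedRadius θ s| ≤ θ⁻¹ * |t - s| := by
  have hrt := le_clampedRadius (t := t) hθ.le hθ1
  have hrs := le_clampedRadius (t := s) hθ.le hθ1
  have hsum : |clampedHeight θ s + clampedHeight θ t| ≤ 2 := by
    have := abs_le.1 (abs_clampedHeight_le θ s)
    have := abs_le.1 (abs_clampedHeight_le θ t)
    have : √(1 - θ ^ 2) ≤ 1 := sqrt_le_one.mpr (by nlinarith)
    exact abs_le.2 ⟨by linarith, by linarith⟩
  -- `r² + h² = 1` turns the difference of the radii into one of the heights
  have hprod : |clampedRadius θ t - clampedRadius θ s| * (clampedRadius θ t + clampedRadius θ s)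
      = |clampedHeight θ s - clampedHeight θ t| * |clampedHeight θ s + clampedHeight θ t| := by
    rw [← abs_of_pos (by linarith : 0 < clampedRadius θ t + clampedRadius θ s), ← abs_mul,
      ← abs_mul]
    congr 1
    linear_combination clampedRadius_sq_add_clampedHeight_sq θ t
      - clampedRadius_sq_add_clampedHeight_sq θ s
  have hh : |clampedHeight θ s - clampedHeight θ t| ≤ |t - s| :=
    (abs_clampedHeight_sub_le θ s t).trans_eq (abs_sub_comm s t)
  rw [← div_eq_inv_mul, le_div_iff₀ hθ]
  nlinarith [abs_nonneg (clampedRadius θ t - clampedRadius θ s),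
    abs_nonneg (clampedHeight θ s - clampedHeight θ t)]

end Profile

section UnitExtension

variable {X V : Type*} [MetricSpace X] [NormedAddCommGroup V] [NormedSpace ℝ V]

theorem norm_inv_norm_smul_sub_inv_norm_smul_le_s12 {r : ℝ} (hr : 0 < r) {u : V} (hu : r ≤ ‖u‖)
    (v : V) : ‖‖u‖⁻¹ • u - ‖v‖⁻¹ • v‖ ≤ 2 / r * ‖u - v‖ := by
  have hu0 : 0 < ‖u‖ := hr.trans_le hu
  have hr' : ‖u‖⁻¹ ≤ r⁻¹ := inv_anti₀ hr hu
  rcases eq_or_ne v 0 with rfl | hv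
  · rw [norm_zero, inv_zero, zero_smul, sub_zero, sub_zero, norm_smul, norm_inv, norm_norm,
      inv_mul_cancel₀ hu0.ne', div_mul_eq_mul_div, le_div_iff₀ hr]
    linarith
  have hv0 : 0 < ‖v‖ := norm_pos_iff.2 hv
  have hsplit : ‖u‖⁻¹ • u - ‖v‖⁻¹ • v
      = ‖u‖⁻¹ • (u - v) + (‖u‖⁻¹ * (‖v‖ - ‖u‖) * ‖v‖⁻¹) • v := by
    have hcoef : ‖u‖⁻¹ * (‖v‖ - ‖u‖) * ‖v‖⁻¹ = ‖u‖⁻¹ - ‖v‖⁻¹ := by field_simp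
    rw [hcoef, smul_sub, sub_smul]
    abel
  rw [hsplit]
  refine (norm_add_le _ _).trans ?_
  rw [norm_smul, norm_smul, norm_mul, norm_mul, norm_inv, norm_inv, norm_norm, norm_norm,
    Real.norm_eq_abs, inv_mul_cancel_right₀ hv0.ne']
  have := abs_norm_sub_norm_le v u
  rw [norm_sub_rev v u] at this
  calc ‖u‖⁻¹ * ‖u - v‖ + ‖u‖⁻¹ * |‖v‖ - ‖u‖| ≤ ‖u‖⁻¹ * ‖u - v‖ + ‖u‖⁻¹ * ‖u - v‖ := by gcongr
    _ ≤ 2 / r * ‖u - v‖ := by rw [div_eq_mul_inv]; nlinarith [norm_nonneg (u - v)]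

theorem exists_lipschitz_cutoff_s12 {A : Set X} (hA : A.Nonempty) {c : ℝ} (hc : 0 < c) :
    ∃ β : X → ℝ, (∀ a ∈ A, β a = 0) ∧ (∀ x, 0 ≤ β x ∧ β x ≤ 1) ∧
      (∀ x y, |β x - β y| ≤ c * dist x y) ∧ ∀ x, β x < 1 → ∃ a ∈ A, c * dist x a < 1 := by
  refine ⟨fun x => min 1 (c * infDist x A), fun a ha => by simp [infDist_zero_of_mem ha],
    fun x => ⟨le_min zero_le_one (mul_nonneg hc.le infDist_nonneg), min_le_left _ _⟩,
    fun x y => ?_, fun x hx => ?_⟩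
  · calc |min 1 (c * infDist x A) - min 1 (c * infDist y A)|
        ≤ |c * infDist x A - c * infDist y A| := by
          simpa [Real.dist_eq] using (LipschitzWith.id.const_min 1).dist_le_mul _ _
      _ = c * |infDist x A - infDist y A| := by rw [← mul_sub, abs_mul, abs_of_pos hc]
      _ ≤ c * dist x y := by
          gcongr
          simpa [Real.dist_eq] using (lipschitz_infDist_pt A).dist_le_mul x y
  · have hx' : infDist x A < c⁻¹ * 1 :=
      (lt_inv_mul_iff₀ hc).2 ((min_lt_iff.1 hx).resolve_left (lt_irrefl 1))
    obtain ⟨a, ha, hxa⟩ := (infDist_lt_iff hA).1 hx'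
    exact ⟨a, ha, (lt_inv_mul_iff₀ hc).1 hxa⟩

variable {A : Set X} {K : ℝ} {F σ : X → V}

theorem dist_interpolation_le {β : X → ℝ} {c : ℝ} (hβ01 : ∀ x, 0 ≤ β x ∧ β x ≤ 1)
    (hβ : ∀ x y, |β x - β y| ≤ c * dist x y) (hF : ∀ x y, dist (F x) (F y) ≤ K * dist x y)
    (hσ : ∀ x y, dist (σ x) (σ y) ≤ K * dist x y) (hnear : ∀ x, β x < 1 → ‖F x - σ x‖ ≤ 1 / 2)
    (x y : X) :
    dist (σ x + (1 - β x) • (F x - σ x)) (σ y + (1 - β y) • (F y - σ y))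
      ≤ (3 * K + c / 2) * dist x y := by
  wlog hxy : β x ≤ β y generalizing x y
  · rw [dist_comm, dist_comm x]
    exact this y x (le_of_not_ge hxy)
  have hsplit : σ x + (1 - β x) • (F x - σ x) - (σ y + (1 - β y) • (F y - σ y))
      = (σ x - σ y) + (1 - β y) • ((F x - σ x) - (F y - σ y)) + (β y - β x) • (F x - σ x) := by
    module
  have h1 : ‖σ x - σ y‖ ≤ K * dist x y := by rw [← dist_eq_norm]; exact hσ x y
  have h2 : ‖(1 - β y) • ((F x - σ x) - (F y - σ y))‖ ≤ 2 * K * dist x y := by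
    have : ‖(F x - σ x) - (F y - σ y)‖ ≤ 2 * K * dist x y := by
      rw [sub_sub_sub_comm]
      refine (norm_sub_le _ _).trans ?_
      rw [← dist_eq_norm, ← dist_eq_norm]
      linarith [hF x y, hσ x y]
    rw [norm_smul, Real.norm_eq_abs, abs_of_nonneg (by linarith [(hβ01 y).2])]
    nlinarith [(hβ01 y).1, norm_nonneg ((F x - σ x) - (F y - σ y))]
  -- the cutoff term vanishes unless `β x < 1`, where `F x` is close to `σ x`
  have h3 : ‖(β y - β x) • (F x - σ x)‖ ≤ c / 2 * dist x y := by
    rcases (hβ01 x).2.lt_or_eq with hx | hx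
    · rw [norm_smul, Real.norm_eq_abs, abs_sub_comm]
      nlinarith [hβ x y, hnear x hx, abs_nonneg (β x - β y), norm_nonneg (F x - σ x)]
    · rw [show β y = β x by linarith [(hβ01 y).2], sub_self, zero_smul, norm_zero]
      linarith [(abs_nonneg _).trans (hβ x y)]
  rw [dist_eq_norm, hsplit]
  refine norm_add₃_le.trans ?_
  linarith

theorem exists_extension_half_le_norm (hA : A.Nonempty) (hK : 0 < K)
    (hF : ∀ x y, dist (F x) (F y) ≤ K * dist x y) (hσ : ∀ x y, dist (σ x) (σ y) ≤ K * dist x y)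
    (hσ1 : ∀ x, ‖σ x‖ = 1) (hFσ : ∀ a ∈ A, dist (F a) (σ a) ≤ 1 / 4) :
    ∃ G : X → V, (∀ a ∈ A, G a = F a) ∧ (∀ x, 1 / 2 ≤ ‖G x‖) ∧
      ∀ x y, dist (G x) (G y) ≤ 7 * K * dist x y := by
  obtain ⟨β, hβA, hβ01, hβ, hβA'⟩ := exists_lipschitz_cutoff_s12 hA (by positivity : 0 < 8 * K)
  have hnear : ∀ x, β x < 1 → ‖F x - σ x‖ ≤ 1 / 2 := by
    intro x hx
    obtain ⟨a, ha, hxa⟩ := hβA' x hx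
    rw [← dist_eq_norm]
    calc dist (F x) (σ x) ≤ dist (F x) (F a) + dist (F a) (σ a) + dist (σ a) (σ x) :=
          dist_triangle4 _ _ _ _
      _ ≤ K * dist x a + 1 / 4 + K * dist a x := by
          gcongr
          exacts [hF x a, hFσ a ha, hσ a x]
      _ ≤ 1 / 2 := by rw [dist_comm a x]; linarith
  refine ⟨fun x => σ x + (1 - β x) • (F x - σ x), fun a ha => by simp [hβA a ha],
    fun x => ?_, fun x y => (dist_interpolation_le hβ01 hβ hF hσ hnear x y).trans_eq (by ring)⟩
  rcases (hβ01 x).2.lt_or_eq with hx | hx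
  · have hsmall : ‖(1 - β x) • (F x - σ x)‖ ≤ 1 / 2 := by
      rw [norm_smul, Real.norm_eq_abs, abs_of_nonneg (by linarith)]
      nlinarith [hnear x hx, (hβ01 x).1, norm_nonneg (F x - σ x)]
    have := norm_sub_le (σ x + (1 - β x) • (F x - σ x)) ((1 - β x) • (F x - σ x))
    rw [add_sub_cancel_right, hσ1] at this
    linarith
  · simp only [hx, sub_self, zero_smul, add_zero, hσ1]
    norm_num

theorem exists_unit_extension (hA : A.Nonempty) (hK : 0 < K)
    (hF : ∀ x y, dist (F x) (F y) ≤ K * dist x y) (hσ : ∀ x y, dist (σ x) (σ y) ≤ K * dist x y)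
    (hσ1 : ∀ x, ‖σ x‖ = 1) (hFA : ∀ a ∈ A, ‖F a‖ = 1) (hFσ : ∀ a ∈ A, dist (F a) (σ a) ≤ 1 / 4) :
    ∃ g : X → V, (∀ a ∈ A, g a = F a) ∧ (∀ x, ‖g x‖ = 1) ∧
      ∀ x y, dist (g x) (g y) ≤ 28 * K * dist x y := by
  obtain ⟨G, hGA, hG, hGlip⟩ := exists_extension_half_le_norm hA hK hF hσ hσ1 hFσ
  refine ⟨fun x => ‖G x‖⁻¹ • G x, fun a ha => by simp [hGA a ha, hFA a ha], fun x => ?_,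
    fun x y => ?_⟩
  · exact norm_smul_inv_norm (norm_pos_iff.1 (by linarith [hG x]))
  · rw [dist_eq_norm]
    refine (norm_inv_norm_smul_sub_inv_norm_smul_le_s12 (by norm_num) (hG x) (G y)).trans ?_
    rw [← dist_eq_norm]
    linarith [hGlip x y]

end UnitExtension

section Suspension

variable {V : Type*} [NormedAddCommGroup V] [InnerProductSpace ℝ V] {e : V} {θ : ℝ}

theorem orthogonalProjectionOnto_add_inner_smul (he : ‖e‖ = 1) (v : V) :
    ((ℝ ∙ e)ᗮ.orthogonalProjectionOnto v : V) + ⟪e, v⟫ • e = v := by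
  rw [Submodule.coe_orthogonalProjectionOnto_apply, add_comm,
    ← Submodule.starProjection_unit_singleton ℝ he,
    Submodule.starProjection_add_starProjection_orthogonal]

theorem norm_orthogonalProjectionOnto_sq_add_inner_sq (he : ‖e‖ = 1) (v : V) :
    ‖(ℝ ∙ e)ᗮ.orthogonalProjectionOnto v‖ ^ 2 + ⟪e, v⟫ ^ 2 = ‖v‖ ^ 2 := by
  rw [Submodule.norm_sq_eq_add_norm_sq_starProjection v (ℝ ∙ e), add_comm,
    ← Submodule.norm_coe, Submodule.coe_orthogonalProjectionOnto_apply,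
    Submodule.starProjection_unit_singleton ℝ he, norm_smul, he, mul_one, Real.norm_eq_abs,
    sq_abs]

noncomputable def suspensionPoint (θ : ℝ) (e w : V) (t : ℝ) : V :=
  clampedRadius θ t • w + clampedHeight θ t • e

theorem norm_suspensionPoint (he : ‖e‖ = 1) {w : V} (hw : ‖w‖ = 1) (hwe : ⟪e, w⟫ = 0)
    (θ t : ℝ) : ‖suspensionPoint θ e w t‖ = 1 := by
  have horth : ⟪clampedRadius θ t • w, clampedHeight θ t • e⟫ = 0 := by
    rw [inner_smul_left, inner_smul_right, real_inner_comm, hwe, mul_zero, mul_zero]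
  have hsq : ‖suspensionPoint θ e w t‖ ^ 2 = 1 := by
    rw [suspensionPoint, norm_add_sq_real, horth, norm_smul, norm_smul, hw, he, Real.norm_eq_abs,
      Real.norm_eq_abs, mul_one, mul_one, sq_abs, sq_abs, mul_zero, add_zero,
      clampedRadius_sq_add_clampedHeight_sq]
  rwa [pow_eq_one_iff_of_nonneg (norm_nonneg _) two_ne_zero] at hsq

theorem dist_suspensionPoint_le (hθ : 0 < θ) (hθ1 : θ ≤ 1) (he : ‖e‖ ≤ 1) {w : V}
    (hw : ‖w‖ ≤ 1) (w' : V) (t t' : ℝ) :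
    dist (suspensionPoint θ e w t) (suspensionPoint θ e w' t')
      ≤ (θ⁻¹ + 1) * |t - t'| + dist w w' := by
  have hr := abs_clampedRadius_sub_le (t := t) (s := t') hθ hθ1
  have hh := abs_clampedHeight_sub_le θ t t'
  have hr' : |clampedRadius θ t'| ≤ 1 := by
    rw [abs_of_nonneg (hθ.le.trans (le_clampedRadius hθ.le hθ1))]
    exact clampedRadius_le_one θ t'
  have hsplit : suspensionPoint θ e w t - suspensionPoint θ e w' t'
      = (clampedRadius θ t - clampedRadius θ t') • w + clampedRadius θ t' • (w - w')
        + (clampedHeight θ t - clampedHeight θ t') • e := by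
    simp only [suspensionPoint, sub_smul, smul_sub]; abel
  rw [dist_eq_norm, dist_eq_norm, hsplit]
  refine (norm_add₃_le ..).trans ?_
  simp only [norm_smul, Real.norm_eq_abs]
  have := abs_nonneg (clampedRadius θ t - clampedRadius θ t')
  have := abs_nonneg (clampedHeight θ t - clampedHeight θ t')
  nlinarith [norm_nonneg (w - w'), abs_nonneg (clampedRadius θ t'), norm_nonneg w, norm_nonneg e]

theorem suspensionPoint_eq_self (hθ : 0 < θ) (he : ‖e‖ = 1) {v : V} (hv : ‖v‖ = 1)
    (hθv : θ ≤ ‖(ℝ ∙ e)ᗮ.orthogonalProjectionOnto v‖) :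
    suspensionPoint θ e (‖(ℝ ∙ e)ᗮ.orthogonalProjectionOnto v‖⁻¹ •
      ((ℝ ∙ e)ᗮ.orthogonalProjectionOnto v : V)) ⟪e, v⟫ = v := by
  set p := ‖(ℝ ∙ e)ᗮ.orthogonalProjectionOnto v‖
  have hpyth : p ^ 2 + ⟪e, v⟫ ^ 2 = 1 := by
    rw [norm_orthogonalProjectionOnto_sq_add_inner_sq he, hv, one_pow]
  have ht : |⟪e, v⟫| ≤ √(1 - θ ^ 2) := by
    rw [← sqrt_sq_eq_abs]
    exact sqrt_le_sqrt (by nlinarith)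
  have hr : clampedRadius θ ⟪e, v⟫ = p := by
    rw [clampedRadius_of_abs_le ht, ← hpyth, add_sub_cancel_right, sqrt_sq (norm_nonneg _)]
  rw [suspensionPoint, hr, clampedHeight_of_abs_le ht, smul_inv_smul₀ (hθ.trans_le hθv).ne',
    orthogonalProjectionOnto_add_inner_smul he]

theorem dist_suspensionPoint_le_of_norm_lt (hθ : 0 ≤ θ) (hθ1 : θ ≤ 1) (he : ‖e‖ = 1) {v : V}
    (hv : ‖v‖ = 1) (hθv : ‖(ℝ ∙ e)ᗮ.orthogonalProjectionOnto v‖ < θ) {w : V} (hw : ‖w‖ ≤ 1) :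
    dist (suspensionPoint θ e w ⟪e, v⟫) v ≤ 2 * θ + θ ^ 2 := by
  set p := ‖(ℝ ∙ e)ᗮ.orthogonalProjectionOnto v‖
  have hpyth : p ^ 2 + ⟪e, v⟫ ^ 2 = 1 := by
    rw [norm_orthogonalProjectionOnto_sq_add_inner_sq he, hv, one_pow]
  have ht1 : |⟪e, v⟫| ≤ 1 := by
    rw [← sqrt_sq_eq_abs, ← sqrt_one]
    exact sqrt_le_sqrt (by nlinarith [norm_nonneg ((ℝ ∙ e)ᗮ.orthogonalProjectionOnto v)])
  have ht : √(1 - θ ^ 2) ≤ |⟪e, v⟫| := by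
    rw [← sqrt_sq_eq_abs]
    exact sqrt_le_sqrt (by nlinarith [norm_nonneg ((ℝ ∙ e)ᗮ.orthogonalProjectionOnto v)])
  have hsplit : suspensionPoint θ e w ⟪e, v⟫ - v
      = θ • w - ((ℝ ∙ e)ᗮ.orthogonalProjectionOnto v : V)
        + (clampedHeight θ ⟪e, v⟫ - ⟪e, v⟫) • e := by
    rw [suspensionPoint, clampedRadius_of_le_abs hθ hθ1 ht]
    linear_combination (norm := module) orthogonalProjectionOnto_add_inner_smul he v
  rw [dist_eq_norm, hsplit]
  refine (norm_add_le_of_le (norm_sub_le_of_le (norm_smul_le _ _) le_rfl) le_rfl).trans ?_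
  rw [norm_smul, he, mul_one, Real.norm_eq_abs, Real.norm_eq_abs, abs_of_nonneg hθ,
    Submodule.norm_coe]
  nlinarith [abs_clampedHeight_sub_self_le hθ hθ1 ht1]

theorem dist_suspensionPoint_inner_le (hθ : 0 < θ) (hθ1 : θ ≤ 1) (he : ‖e‖ = 1) {v : V}
    (hv : ‖v‖ = 1) {w : V} (hw : ‖w‖ ≤ 1)
    (hwv : θ ≤ ‖(ℝ ∙ e)ᗮ.orthogonalProjectionOnto v‖ →
      w = ‖(ℝ ∙ e)ᗮ.orthogonalProjectionOnto v‖⁻¹ • ((ℝ ∙ e)ᗮ.orthogonalProjectionOnto v : V)) :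
    dist (suspensionPoint θ e w ⟪e, v⟫) v ≤ 2 * θ + θ ^ 2 := by
  rcases le_or_gt θ ‖(ℝ ∙ e)ᗮ.orthogonalProjectionOnto v‖ with h | h
  · rw [hwv h, suspensionPoint_eq_self hθ he hv h, dist_self]
    positivity
  · exact dist_suspensionPoint_le_of_norm_lt hθ.le hθ1 he hv h hw

theorem abs_inner_sub_inner_le (he : ‖e‖ ≤ 1) (u u' : V) : |⟪e, u⟫ - ⟪e, u'⟫| ≤ dist u u' := by
  rw [← inner_sub_right, dist_eq_norm]
  exact (abs_real_inner_le_norm _ _).trans (mul_le_of_le_one_left (norm_nonneg _) he)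

theorem norm_inv_norm_smul_orthogonalProjectionOnto_sub_le (hθ : 0 < θ) {u : V}
    (hu : θ ≤ ‖(ℝ ∙ e)ᗮ.orthogonalProjectionOnto u‖) (u' : V) :
    ‖‖(ℝ ∙ e)ᗮ.orthogonalProjectionOnto u‖⁻¹ • (ℝ ∙ e)ᗮ.orthogonalProjectionOnto u
      - ‖(ℝ ∙ e)ᗮ.orthogonalProjectionOnto u'‖⁻¹ • (ℝ ∙ e)ᗮ.orthogonalProjectionOnto u'‖
      ≤ 2 / θ * ‖u - u'‖ := by
  refine (norm_inv_norm_smul_sub_inv_norm_smul_le_s12 hθ hu _).trans ?_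
  rw [← map_sub]
  gcongr
  exact (ℝ ∙ e)ᗮ.norm_orthogonalProjectionOnto_apply_le _

end Suspension

section Extensor

theorem exists_lipschitz_extension_of_finiteDimensional (X V : Type*) [MetricSpace X]
    [NormedAddCommGroup V] [NormedSpace ℝ V] [FiniteDimensional ℝ V] :
    ∃ K : ℝ, 0 < K ∧ ∀ (A : Set X) (f : A → V) (lam : ℝ), 0 ≤ lam →
      (∀ a b : A, dist (f a) (f b) ≤ lam * dist (a : X) b) →
      ∃ F : X → V, (∀ a : A, F a = f a) ∧ ∀ x y, dist (F x) (F y) ≤ K * lam * dist x y := by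
  refine ⟨lipschitzExtensionConstant V, lipschitzExtensionConstant_pos V,
    fun A f lam hlam hf => ?_⟩
  classical
  have hf' : LipschitzOnWith lam.toNNReal (fun x => if h : x ∈ A then f ⟨x, h⟩ else 0) A :=
    LipschitzOnWith.of_dist_le_mul fun x hx y hy => by
      simpa [dif_pos hx, dif_pos hy, Real.coe_toNNReal _ hlam] using hf ⟨x, hx⟩ ⟨y, hy⟩
  obtain ⟨F, hF, hFA⟩ := hf'.extend_finite_dimension
  refine ⟨F, fun a => by simpa using (hFA a.2).symm, fun x y => ?_⟩
  simpa [Real.coe_toNNReal _ hlam, mul_assoc] using hF.dist_le_mul x y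

def LinearIsometryEquiv.sphereIsometryEquiv {𝕜 E F : Type*} [NormedField 𝕜]
    [SeminormedAddCommGroup E] [SeminormedAddCommGroup F] [NormedSpace 𝕜 E] [NormedSpace 𝕜 F]
    (φ : E ≃ₗᵢ[𝕜] F) (r : ℝ) : sphere (0 : E) r ≃ᵢ sphere (0 : F) r where
  toEquiv := φ.toEquiv.subtypeEquiv fun x => by simp
  isometry_toFun x y := φ.isometry.edist_eq x y

theorem SmallScaleLipschitzExtensorOf.of_isometryEquiv {X E E' : Type*} [MetricSpace X]
    [MetricSpace E] [MetricSpace E'] (h : SmallScaleLipschitzExtensorOf X E) (φ : E ≃ᵢ E') :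
    SmallScaleLipschitzExtensorOf X E' := by
  obtain ⟨C, hC, M, hM, H⟩ := h
  refine ⟨C, hC, M, hM, fun A hA lam hlam f hf => ?_⟩
  obtain ⟨g, hgA, hg⟩ := H A hA lam hlam (φ.symm ∘ f) fun a b => by
    simpa only [Function.comp_apply, φ.symm.dist_eq] using hf a b
  exact ⟨φ ∘ g, fun a => by simp [hgA a], fun x y => by
    simpa only [Function.comp_apply, φ.dist_eq] using hg x y⟩

theorem SmallScaleLipschitzExtensorOf.exists_extension {X E : Type*} [MetricSpace X]
    [MetricSpace E] [Nonempty E] (h : SmallScaleLipschitzExtensorOf X E) :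
    ∃ C : ℝ, 0 < C ∧ ∃ M : ℝ, 0 < M ∧ ∀ (A : Set X) (lam : ℝ), M < lam →
      ∀ f : A → E, (∀ a b : A, dist (f a) (f b) ≤ lam * dist (a : X) b) →
        ∃ g : X → E, (∀ a : A, g a = f a) ∧ ∀ x y, dist (g x) (g y) ≤ C * lam * dist x y := by
  obtain ⟨C, hC, M, hM, H⟩ := h
  refine ⟨C, hC, M, hM, fun A lam hlam f hf => ?_⟩
  rcases A.eq_empty_or_nonempty with rfl | hA
  · refine ⟨fun _ => Classical.arbitrary E, fun a => a.2.elim, fun x y => ?_⟩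
    rw [dist_self]
    have := hM.trans hlam
    positivity
  · exact H A hA lam hlam f hf

theorem SmallScaleLipschitzExtensorOf.exists_near_sphere_map {X V : Type*} [MetricSpace X]
    [NormedAddCommGroup V] [InnerProductSpace ℝ V] {e : V} (he : ‖e‖ = 1)
    [Nontrivial (ℝ ∙ e)ᗮ] (h : SmallScaleLipschitzExtensorOf X (sphere (0 : (ℝ ∙ e)ᗮ) 1)) :
    ∃ C : ℝ, 0 < C ∧ ∃ M : ℝ, 0 < M ∧ ∀ (A : Set X) (lam : ℝ), M < lam → ∀ F : X → V,
      (∀ a ∈ A, ‖F a‖ = 1) → (∀ a ∈ A, ∀ b ∈ A, dist (F a) (F b) ≤ lam * dist a b) →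
      ∃ σ : X → V, (∀ x, ‖σ x‖ = 1) ∧
        (∀ x y, dist (σ x) (σ y) ≤ 11 * dist (F x) (F y) + C * lam * dist x y) ∧
        ∀ a ∈ A, dist (F a) (σ a) ≤ 1 / 4 := by
  have : Nonempty (sphere (0 : (ℝ ∙ e)ᗮ) 1) :=
    (NormedSpace.sphere_nonempty.2 zero_le_one).to_subtype
  obtain ⟨C₀, hC₀, M₀, hM₀, H⟩ := h.exists_extension
  refine ⟨20 * C₀, by positivity, M₀, hM₀, fun A lam hlam F hFA hF => ?_⟩
  have hlam0 : 0 < lam := hM₀.trans hlam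
  set P := (ℝ ∙ e)ᗮ.orthogonalProjectionOnto
  -- `θ = 1 / 10` keeps the error `2θ + θ²` of `dist_suspensionPoint_inner_le` below `1 / 4`
  let A₁ : Set X := {x ∈ A | 1 / 10 ≤ ‖P (F x)‖}
  let v : A₁ → sphere (0 : (ℝ ∙ e)ᗮ) 1 := fun x => ⟨‖P (F x)‖⁻¹ • P (F x),
    mem_sphere_zero_iff_norm.2 (norm_smul_inv_norm (norm_pos_iff.1 (by linarith [x.2.2])))⟩
  have hv : ∀ x y : A₁, dist (v x) (v y) ≤ 20 * lam * dist (x : X) y := fun x y => by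
    rw [Subtype.dist_eq, dist_eq_norm]
    refine (norm_inv_norm_smul_orthogonalProjectionOnto_sub_le (by norm_num) x.2.2 _).trans ?_
    rw [← dist_eq_norm]
    linarith [hF x x.2.1 y y.2.1]
  obtain ⟨w, hwA, hw⟩ := H A₁ (20 * lam) (by linarith) v hv
  have hw1 : ∀ x, ‖((w x : (ℝ ∙ e)ᗮ) : V)‖ = 1 := fun x =>
    (Submodule.norm_coe _).trans (norm_eq_of_mem_sphere _)
  refine ⟨fun x => suspensionPoint (1 / 10) e (w x : (ℝ ∙ e)ᗮ) ⟪e, F x⟫, fun x =>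
    norm_suspensionPoint he (hw1 x)
      (Submodule.mem_orthogonal_singleton_iff_inner_right.1 (w x).1.2) _ _, fun x y => ?_,
    fun a ha => ?_⟩
  · refine (dist_suspensionPoint_le (by norm_num) (by norm_num) he.le (hw1 x).le _ _ _).trans ?_
    have hFxy := abs_inner_sub_inner_le he.le (F x) (F y)
    have hwxy : dist ((w x : (ℝ ∙ e)ᗮ) : V) (w y : (ℝ ∙ e)ᗮ) ≤ C₀ * (20 * lam) * dist x y := hw x y
    linarith
  · rw [dist_comm]
    refine (dist_suspensionPoint_inner_le (by norm_num) (by norm_num) he (hFA a ha) (hw1 a).le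
      fun h => ?_).trans (by norm_num)
    rw [hwA ⟨a, ha, h⟩, Submodule.coe_smul]

theorem SmallScaleLipschitzExtensorOf.sphere_of_sphere_orthogonal {X V : Type*} [MetricSpace X]
    [NormedAddCommGroup V] [InnerProductSpace ℝ V] [FiniteDimensional ℝ V] {e : V}
    (he : ‖e‖ = 1) [Nontrivial (ℝ ∙ e)ᗮ]
    (h : SmallScaleLipschitzExtensorOf X (sphere (0 : (ℝ ∙ e)ᗮ) 1)) :
    SmallScaleLipschitzExtensorOf X (sphere (0 : V) 1) := by
  obtain ⟨C₀, hC₀, M₀, hM₀, H⟩ := h.exists_near_sphere_map he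
  obtain ⟨K, hK, hext⟩ := exists_lipschitz_extension_of_finiteDimensional X V
  refine ⟨28 * (11 * K + C₀), by positivity, M₀, hM₀, fun A hA lam hlam f hf => ?_⟩
  have hlam0 : 0 < lam := hM₀.trans hlam
  obtain ⟨F, hFA, hF⟩ := hext A (fun a => f a) lam hlam0.le hf
  have hF1 : ∀ a ∈ A, ‖F a‖ = 1 := fun a ha => by rw [hFA ⟨a, ha⟩]; exact norm_eq_of_mem_sphere _
  obtain ⟨σ, hσ1, hσ, hFσ⟩ := H A lam hlam F hF1 fun a ha b hb => by
    rw [hFA ⟨a, ha⟩, hFA ⟨b, hb⟩]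
    exact hf ⟨a, ha⟩ ⟨b, hb⟩
  have hFK : ∀ x y, dist (F x) (F y) ≤ (11 * K + C₀) * lam * dist x y := fun x y =>
    (hF x y).trans (by gcongr; linarith)
  have hσK : ∀ x y, dist (σ x) (σ y) ≤ (11 * K + C₀) * lam * dist x y := fun x y =>
    (hσ x y).trans (by nlinarith [hF x y])
  obtain ⟨g, hgA, hg1, hg⟩ := exists_unit_extension hA (by positivity) hFK hσK hσ1 hF1 hFσ
  exact ⟨fun x => ⟨g x, by simpa using hg1 x⟩, fun a => Subtype.ext ((hgA a a.2).trans (hFA a)),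
    fun x y => (hg x y).trans_eq (by ring)⟩

end Extensor

theorem sphere_succ_small_scale_extensor_of_sphere
    {X : Type*} [MetricSpace X] (n : ℕ)
    (h : SmallScaleLipschitzExtensorOf X
      (Metric.sphere (0 : EuclideanSpace ℝ (Fin (n + 1))) 1)) :
    SmallScaleLipschitzExtensorOf X
      (Metric.sphere (0 : EuclideanSpace ℝ (Fin (n + 2))) 1) := by
  set e : EuclideanSpace ℝ (Fin (n + 2)) := EuclideanSpace.single (Fin.last (n + 1)) 1
  have he : ‖e‖ = 1 := by simp [e]
  have : Fact (Module.finrank ℝ (EuclideanSpace ℝ (Fin (n + 2))) = n + 1 + 1) := ⟨by simp⟩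
  have hdim : Module.finrank ℝ (ℝ ∙ e)ᗮ = n + 1 :=
    Submodule.finrank_orthogonal_span_singleton (norm_ne_zero_iff.1 (by simp [he]))
  let φ : EuclideanSpace ℝ (Fin (n + 1)) ≃ₗᵢ[ℝ] (ℝ ∙ e)ᗮ :=
    ((stdOrthonormalBasis ℝ (ℝ ∙ e)ᗮ).reindex (finCongr hdim)).repr.symm
  have : Nontrivial (ℝ ∙ e)ᗮ := φ.symm.toEquiv.nontrivial
  exact (h.of_isometryEquiv (φ.sphereIsometryEquiv 1)).sphere_of_sphere_orthogonal he
end
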